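/- arXiv:1910.09346 — 16 statements merged into one kernel-verified Lean document; each statement's English description precedes it below -/
import Mathlib

section
/- Suppose (x_n)_{n≥-1}, (y_n)_{n≥-1} solve the system with x_n ≠ 0 and y_n ≠ 0 for all n. Define U_n := 1/(x_n·y_{n-1}) for n ≥ 0. Then U satisfies the first-order linear difference equation U_{n+1} = a_n·U_n + b_n for all n ≥ 0. -/
theorem stmt_1 (x y : ℤ → ℝ) (a b c d : ℕ → ℝ)
    (hx : ∀ n : ℤ, -1 ≤ n → x n ≠ 0) (hy : ∀ n : ℤ, -1 ≤ n → y n ≠ 0)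
    (hda : ∀ n : ℕ, a n + b n * (x n * y ((n : ℤ) - 1)) ≠ 0)
    (hdc : ∀ n : ℕ, c n + d n * (x ((n : ℤ) - 1) * y n) ≠ 0)
    (hxe : ∀ n : ℕ, x ((n : ℤ) + 1) =
      x n * y ((n : ℤ) - 1) / (y n * (a n + b n * (x n * y ((n : ℤ) - 1)))))
    (hye : ∀ n : ℕ, y ((n : ℤ) + 1) =
      x ((n : ℤ) - 1) * y n / (x n * (c n + d n * (x ((n : ℤ) - 1) * y n))))
    (U : ℕ → ℝ) (hU : ∀ n : ℕ, U n = 1 / (x n * y ((n : ℤ) - 1))) :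
    ∀ n : ℕ, U (n + 1) = a n * U n + b n := by
  intro n
  have hxn : x (n : ℤ) ≠ 0 := hx n (by omega)
  have hyn : y (n : ℤ) ≠ 0 := hy n (by omega)
  have hy1 : y ((n : ℤ) - 1) ≠ 0 := hy _ (by omega)
  have key : ((n + 1 : ℕ) : ℤ) - 1 = (n : ℤ) := by push_cast; ring
  rw [hU, hU, key]
  have h1 : ((n + 1 : ℕ) : ℤ) = (n : ℤ) + 1 := by push_cast; ring
  rw [h1, hxe n]
  field_simp
end

section
/- Suppose (x_n)_{n≥-1}, (y_n)_{n≥-1} solve the system with x_n ≠ 0 and y_n ≠ 0 for all n. Define V_n := 1/(x_{n-1}·y_n) for n ≥ 0. Then V satisfies the first-order linear difference equation V_{n+1} = c_n·V_n + d_n for all n ≥ 0. -/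
theorem stmt_2 (x y : ℤ → ℝ) (a b c d : ℕ → ℝ)
    (hx : ∀ n : ℤ, -1 ≤ n → x n ≠ 0) (hy : ∀ n : ℤ, -1 ≤ n → y n ≠ 0)
    (hda : ∀ n : ℕ, a n + b n * (x n * y ((n : ℤ) - 1)) ≠ 0)
    (hdc : ∀ n : ℕ, c n + d n * (x ((n : ℤ) - 1) * y n) ≠ 0)
    (hxe : ∀ n : ℕ, x ((n : ℤ) + 1) =
      x n * y ((n : ℤ) - 1) / (y n * (a n + b n * (x n * y ((n : ℤ) - 1)))))
    (hye : ∀ n : ℕ, y ((n : ℤ) + 1) =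
      x ((n : ℤ) - 1) * y n / (x n * (c n + d n * (x ((n : ℤ) - 1) * y n))))
    (V : ℕ → ℝ) (hV : ∀ n : ℕ, V n = 1 / (x ((n : ℤ) - 1) * y n)) :
    ∀ n : ℕ, V (n + 1) = c n * V n + d n := by
  intro n
  have hxm : x ((n : ℤ) - 1) ≠ 0 := hx _ (by omega)
  have hxn : x (n : ℤ) ≠ 0 := hx _ (by omega)
  have hyn : y (n : ℤ) ≠ 0 := hy _ (by omega)
  have hc := hdc n
  rw [hV, hV, show ((n + 1 : ℕ) : ℤ) - 1 = (n : ℤ) by push_cast; ring,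
    show ((n + 1 : ℕ) : ℤ) = (n : ℤ) + 1 by push_cast; ring, hye n]
  field_simp
end

section
/- Suppose (x_n)_{n≥-1}, (y_n)_{n≥-1} solve the system with x_n ≠ 0 and y_n ≠ 0 for all n, and define U_n := 1/(x_n·y_{n-1}) and V_n := 1/(x_{n-1}·y_n) for n ≥ 0. Then for every n ≥ 0 and j ∈ {-1, 0}, x_{2n+j} = x_j·∏_{s=0}^{n-1} (V_{2s+j+1}/U_{2s+j+2}) and y_{2n+j} = y_j·∏_{s=0}^{n-1} (U_{2s+j+1}/V_{2s+j+2}). -/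
theorem stmt_4 (x y : ℤ → ℝ) (a b c d : ℕ → ℝ)
    (hx : ∀ n : ℤ, -1 ≤ n → x n ≠ 0) (hy : ∀ n : ℤ, -1 ≤ n → y n ≠ 0)
    (hda : ∀ n : ℕ, a n + b n * (x n * y ((n : ℤ) - 1)) ≠ 0)
    (hdc : ∀ n : ℕ, c n + d n * (x ((n : ℤ) - 1) * y n) ≠ 0)
    (hxe : ∀ n : ℕ, x ((n : ℤ) + 1) =
      x n * y ((n : ℤ) - 1) / (y n * (a n + b n * (x n * y ((n : ℤ) - 1)))))
    (hye : ∀ n : ℕ, y ((n : ℤ) + 1) =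
      x ((n : ℤ) - 1) * y n / (x n * (c n + d n * (x ((n : ℤ) - 1) * y n))))
    (U V : ℤ → ℝ)
    (hU : ∀ n : ℤ, 0 ≤ n → U n = 1 / (x n * y (n - 1)))
    (hV : ∀ n : ℤ, 0 ≤ n → V n = 1 / (x (n - 1) * y n)) :
    ∀ n : ℕ, ∀ j : ℤ, j = -1 ∨ j = 0 →
      x (2 * (n : ℤ) + j) =
        x j * ∏ s ∈ Finset.range n, V (2 * (s : ℤ) + j + 1) / U (2 * (s : ℤ) + j + 2) ∧
      y (2 * (n : ℤ) + j) =
        y j * ∏ s ∈ Finset.range n, U (2 * (s : ℤ) + j + 1) / V (2 * (s : ℤ) + j + 2) := by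
  have hVU : ∀ m : ℤ, -1 ≤ m → V (m + 1) / U (m + 2) = x (m + 2) / x m := by
    intro m hm
    rw [hV _ (by omega), hU _ (by omega)]
    have h1 : m + 1 - 1 = m := by ring
    have h2 : m + 2 - 1 = m + 1 := by ring
    rw [h1, h2]
    have hxm := hx m hm
    have hym := hy (m + 1) (by omega)
    have hxm2 := hx (m + 2) (by omega)
    field_simp
  have hUV : ∀ m : ℤ, -1 ≤ m → U (m + 1) / V (m + 2) = y (m + 2) / y m := by
    intro m hm
    rw [hU _ (by omega), hV _ (by omega)]
    have h1 : m + 1 - 1 = m := by ring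
    have h2 : m + 2 - 1 = m + 1 := by ring
    rw [h1, h2]
    have hym := hy m hm
    have hxm := hx (m + 1) (by omega)
    have hym2 := hy (m + 2) (by omega)
    field_simp
  intro n
  induction n with
  | zero => intro j hj; simp
  | succ n ih =>
    intro j hj
    obtain ⟨h1, h2⟩ := ih j hj
    have hj' : -1 ≤ j := by rcases hj with h | h <;> omega
    have hm : -1 ≤ 2 * (n : ℤ) + j := by omega
    have hxn := hx (2 * (n : ℤ) + j) hm
    have hyn := hy (2 * (n : ℤ) + j) hm
    constructor
    · rw [Finset.prod_range_succ, ← mul_assoc, ← h1, hVU _ hm]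
      have he : 2 * ((n : ℤ) + 1) + j = 2 * (n : ℤ) + j + 2 := by ring
      push_cast
      rw [he]
      field_simp
    · rw [Finset.prod_range_succ, ← mul_assoc, ← h2, hUV _ hm]
      have he : 2 * ((n : ℤ) + 1) + j = 2 * (n : ℤ) + j + 2 := by ring
      push_cast
      rw [he]
      field_simp
end

section
/- Suppose (x_n)_{n≥-1}, (y_n)_{n≥-1} solve the system with x_n ≠ 0 and y_n ≠ 0 for all n. Then for every n ≥ 0, x_{2n-1} = x_{-1}^{1-n}·(x_0·y_{-1}/y_0)^n·∏_{s=0}^{n-1} [(∏_{k=0}^{2s-1} c_k + x_{-1}·y_0·∑_{l=0}^{2s-1} d_l·∏_{k=l+1}^{2s-1} c_k) / (∏_{k=0}^{2s} a_k + x_0·y_{-1}·∑_{l=0}^{2s} b_l·∏_{k=l+1}^{2s} a_k)], where x_{-1}^{1-n} denotes an integer power of the nonzero real x_{-1}. -/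
/-!
With `u n = x n * y (n - 1)` and `v n = x (n - 1) * y n` the system decouples into
`u (n + 1) * (a n + b n * u n) = u n` and `v (n + 1) * (c n + d n * v n) = v n`,
i.e. `1 / u` and `1 / v` satisfy first-order linear recurrences, solved in closed form by
`u n * affineOrbit a b (u 0) n = u 0`. Since `x (2n+1) / x (2n-1) = u (2n+1) / v (2n)`,
the odd-indexed `x` is a telescoping product of these closed forms.
-/

open Finset

def affineOrbit {R : Type*} [CommSemiring R] (a b : ℕ → R) (u : R) : ℕ → R
  | 0 => 1
  | m + 1 => a m * affineOrbit a b u m + u * b m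

theorem affineOrbit_eq_sum {R : Type*} [CommSemiring R] (a b : ℕ → R) (u : R) (m : ℕ) :
    affineOrbit a b u m =
      (∏ k ∈ range m, a k) + u * ∑ l ∈ range m, b l * ∏ k ∈ Ico (l + 1) m, a k := by
  induction m with
  | zero => simp [affineOrbit]
  | succ m ih =>
    have tail : ∀ l ∈ range m, b l * ∏ k ∈ Ico (l + 1) (m + 1), a k
        = (b l * ∏ k ∈ Ico (l + 1) m, a k) * a m := fun l hl => by
      rw [prod_Ico_succ_top (mem_range.mp hl), mul_assoc]
    rw [affineOrbit, ih, prod_range_succ, sum_range_succ, sum_congr rfl tail, ← sum_mul]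
    simp only [Ico_self, prod_empty]
    ring

theorem mul_affineOrbit_of_recurrence {R : Type*} [CommRing R] (a b : ℕ → R) {u : ℕ → R}
    (h : ∀ n, u (n + 1) * (a n + b n * u n) = u n) (m : ℕ) :
    u m * affineOrbit a b (u 0) m = u 0 := by
  induction m with
  | zero => simp [affineOrbit]
  | succ m ih =>
    rw [affineOrbit]
    linear_combination affineOrbit a b (u 0) m * h m + (1 - u (m + 1) * b m) * ih

theorem eq_mul_pow_mul_prod_of_succ_eq {M : Type*} [CommMonoid M] {z q : ℕ → M} {r : M}
    (h : ∀ n, z (n + 1) = z n * r * q n) (n : ℕ) :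
    z n = z 0 * r ^ n * ∏ s ∈ range n, q s := by
  induction n with
  | zero => simp
  | succ n ih =>
    rw [h, ih, pow_succ, prod_range_succ]
    ac_rfl

section System

variable {K : Type*} [Field K] {x y : ℤ → K} {a b c d : ℕ → K}

theorem mul_affineOrbit_forward (hy : ∀ n : ℕ, y n ≠ 0)
    (hda : ∀ n : ℕ, a n + b n * (x n * y ((n : ℤ) - 1)) ≠ 0)
    (hxe : ∀ n : ℕ, x ((n : ℤ) + 1) =
      x n * y ((n : ℤ) - 1) / (y n * (a n + b n * (x n * y ((n : ℤ) - 1))))) (m : ℕ) :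
    x m * y ((m : ℤ) - 1) * affineOrbit a b (x 0 * y (-1)) m = x 0 * y (-1) := by
  have h := mul_affineOrbit_of_recurrence a b (u := fun m : ℕ => x m * y ((m : ℤ) - 1))
    (fun n => by
      push_cast
      rw [add_sub_cancel_right, hxe n, mul_assoc,
        div_mul_cancel₀ _ (mul_ne_zero (hy n) (hda n))]) m
  simpa using h

theorem mul_affineOrbit_backward (hx : ∀ n : ℕ, x n ≠ 0)
    (hdc : ∀ n : ℕ, c n + d n * (x ((n : ℤ) - 1) * y n) ≠ 0)
    (hye : ∀ n : ℕ, y ((n : ℤ) + 1) =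
      x ((n : ℤ) - 1) * y n / (x n * (c n + d n * (x ((n : ℤ) - 1) * y n)))) (m : ℕ) :
    x ((m : ℤ) - 1) * y m * affineOrbit c d (x (-1) * y 0) m = x (-1) * y 0 := by
  have h := mul_affineOrbit_of_recurrence c d (u := fun m : ℕ => x ((m : ℤ) - 1) * y m)
    (fun n => by
      push_cast
      rw [add_sub_cancel_right, hye n, mul_comm (x _), mul_assoc,
        div_mul_cancel₀ _ (mul_ne_zero (hx n) (hdc n))]) m
  simpa using h

theorem x_odd_succ {A C : ℕ → K} {u₀ v₀ : K}
    (hu : ∀ m : ℕ, x m * y ((m : ℤ) - 1) * A m = u₀)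
    (hv : ∀ m : ℕ, x ((m : ℤ) - 1) * y m * C m = v₀) (hu₀ : u₀ ≠ 0) (hv₀ : v₀ ≠ 0)
    {n : ℕ} (hy : y (2 * (n : ℤ)) ≠ 0) :
    x (2 * ((n + 1 : ℕ) : ℤ) - 1) =
      x (2 * (n : ℤ) - 1) * (u₀ / v₀) * (C (2 * n) / A (2 * n + 1)) := by
  have hu' := hu (2 * n + 1)
  have hv' := hv (2 * n)
  push_cast at hu' hv' ⊢
  rw [add_sub_cancel_right] at hu'
  have hA : A (2 * n + 1) ≠ 0 := right_ne_zero_of_mul (hu' ▸ hu₀)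
  have hC : C (2 * n) ≠ 0 := right_ne_zero_of_mul (hv' ▸ hv₀)
  have hx_odd : x (2 * n + 1) = u₀ / (y (2 * n) * A (2 * n + 1)) :=
    eq_div_of_mul_eq (mul_ne_zero hy hA) (by rw [← hu', mul_assoc])
  have hx_even : x (2 * n - 1) = v₀ / (y (2 * n) * C (2 * n)) :=
    eq_div_of_mul_eq (mul_ne_zero hy hC) (by rw [← hv', mul_assoc])
  rw [show 2 * ((n : ℤ) + 1) - 1 = 2 * n + 1 by ring, hx_odd, hx_even]
  field_simp

end System

theorem stmt_5 (x y : ℤ → ℝ) (a b c d : ℕ → ℝ)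
    (hx : ∀ n : ℤ, -1 ≤ n → x n ≠ 0) (hy : ∀ n : ℤ, -1 ≤ n → y n ≠ 0)
    (hda : ∀ n : ℕ, a n + b n * (x n * y ((n : ℤ) - 1)) ≠ 0)
    (hdc : ∀ n : ℕ, c n + d n * (x ((n : ℤ) - 1) * y n) ≠ 0)
    (hxe : ∀ n : ℕ, x ((n : ℤ) + 1) =
      x n * y ((n : ℤ) - 1) / (y n * (a n + b n * (x n * y ((n : ℤ) - 1)))))
    (hye : ∀ n : ℕ, y ((n : ℤ) + 1) =
      x ((n : ℤ) - 1) * y n / (x n * (c n + d n * (x ((n : ℤ) - 1) * y n)))) :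
    ∀ n : ℕ, x (2 * (n : ℤ) - 1) =
      x (-1) ^ (1 - (n : ℤ)) * (x 0 * y (-1) / y 0) ^ n *
        ∏ s ∈ Finset.range n,
          ((∏ k ∈ Finset.range (2 * s), c k) +
              x (-1) * y 0 * ∑ l ∈ Finset.range (2 * s), d l * ∏ k ∈ Finset.Ico (l + 1) (2 * s), c k) /
          ((∏ k ∈ Finset.range (2 * s + 1), a k) +
              x 0 * y (-1) * ∑ l ∈ Finset.range (2 * s + 1), b l * ∏ k ∈ Finset.Ico (l + 1) (2 * s + 1), a k) := by
  have hx_neg_one : x (-1) ≠ 0 := hx (-1) le_rfl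
  have hu₀ : x 0 * y (-1) ≠ 0 := mul_ne_zero (hx 0 (by norm_num)) (hy (-1) le_rfl)
  have hv₀ : x (-1) * y 0 ≠ 0 := mul_ne_zero hx_neg_one (hy 0 (by norm_num))
  have hu := mul_affineOrbit_forward (fun n => hy n (by omega)) hda hxe
  have hv := mul_affineOrbit_backward (fun n => hx n (by omega)) hdc hye
  intro n
  rw [eq_mul_pow_mul_prod_of_succ_eq (z := fun n : ℕ => x (2 * (n : ℤ) - 1))
    (fun n => x_odd_succ hu hv hu₀ hv₀ (hy _ (by omega))) n]
  simp_rw [← affineOrbit_eq_sum]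
  congr 1
  rw [zpow_sub₀ hx_neg_one, zpow_one, zpow_natCast]
  simp only [Nat.cast_zero, mul_zero, zero_sub, div_pow, mul_pow]
  field_simp
end

section
/- Suppose (x_n)_{n≥-1}, (y_n)_{n≥-1} solve the system with x_n ≠ 0 and y_n ≠ 0 for all n. Then for every n ≥ 0, x_{2n} = x_0^{n+1}·(y_{-1}/(x_{-1}·y_0))^n·∏_{s=0}^{n-1} [(∏_{k=0}^{2s} c_k + x_{-1}·y_0·∑_{l=0}^{2s} d_l·∏_{k=l+1}^{2s} c_k) / (∏_{k=0}^{2s+1} a_k + x_0·y_{-1}·∑_{l=0}^{2s+1} b_l·∏_{k=l+1}^{2s+1} a_k)]. -/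
/-!
Along a solution, `u n = x n * y (n - 1)` and `v n = x (n - 1) * y n` obey the decoupled Riccati
equations `u (n + 1) = u n / (a n + b n * u n)` and `v (n + 1) = v n / (c n + d n * v n)`.
Their reciprocals satisfy first-order linear recurrences, which are solved explicitly.
Since `x (2n + 2) / x (2n) = u (2n + 2) / v (2n + 1)`, the even terms are a telescoping product.
-/

open Finset

section RiccatiDenom

variable {R : Type*} [CommRing R]

/-- The solution of `D (n + 1) = a n * D n + z * b n` with `D 0 = 1`. -/
def riccatiDenom (a b : ℕ → R) (z : R) (n : ℕ) : R :=
  ∏ k ∈ range n, a k + z * ∑ l ∈ range n, b l * ∏ k ∈ Ico (l + 1) n, a k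

@[simp]
theorem riccatiDenom_zero (a b : ℕ → R) (z : R) : riccatiDenom a b z 0 = 1 := by
  simp [riccatiDenom]

theorem riccatiDenom_succ (a b : ℕ → R) (z : R) (n : ℕ) :
    riccatiDenom a b z (n + 1) = a n * riccatiDenom a b z n + z * b n := by
  have hsum : ∑ l ∈ range (n + 1), b l * ∏ k ∈ Ico (l + 1) (n + 1), a k =
      a n * ∑ l ∈ range n, b l * ∏ k ∈ Ico (l + 1) n, a k + b n := by
    rw [sum_range_succ, Ico_self, prod_empty, mul_one, mul_sum]
    congr 1
    refine sum_congr rfl fun l hl => ?_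
    rw [prod_Ico_succ_top (mem_range.mp hl)]
    ring
  rw [riccatiDenom, riccatiDenom, prod_range_succ, hsum]
  ring

/-- The reciprocal of a solution of `u (n + 1) = u n / (a n + b n * u n)` is `D n / u 0`. -/
theorem mul_riccatiDenom_eq [IsDomain R] {a b u : ℕ → R} (hu : ∀ n, u n ≠ 0)
    (hrec : ∀ n, u (n + 1) * (a n + b n * u n) = u n) (n : ℕ) :
    u n * riccatiDenom a b (u 0) n = u 0 := by
  induction n with
  | zero => simp
  | succ n ih =>
    refine mul_left_cancel₀ (hu n) ?_
    rw [riccatiDenom_succ]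
    linear_combination (a n * u (n + 1)) * ih + u 0 * hrec n

end RiccatiDenom

theorem eq_mul_pow_mul_prod_of_succ {M : Type*} [CommMonoid M] {f g : ℕ → M} {r : M}
    (h : ∀ n, f (n + 1) = f n * r * g n) (n : ℕ) :
    f n = f 0 * r ^ n * ∏ s ∈ range n, g s := by
  induction n with
  | zero => simp
  | succ n ih =>
    rw [h, ih, pow_succ, prod_range_succ]
    ac_rfl

section System

variable {x y : ℤ → ℝ} {a b c d : ℕ → ℝ}

theorem mul_riccatiDenom_x (hx : ∀ n : ℤ, -1 ≤ n → x n ≠ 0) (hy : ∀ n : ℤ, -1 ≤ n → y n ≠ 0)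
    (hda : ∀ n : ℕ, a n + b n * (x n * y ((n : ℤ) - 1)) ≠ 0)
    (hxe : ∀ n : ℕ, x ((n : ℤ) + 1) =
      x n * y ((n : ℤ) - 1) / (y n * (a n + b n * (x n * y ((n : ℤ) - 1)))))
    (n : ℕ) :
    x n * y ((n : ℤ) - 1) * riccatiDenom a b (x 0 * y (-1)) n = x 0 * y (-1) := by
  have hrec (n : ℕ) : x ((n : ℤ) + 1) * y n * (a n + b n * (x n * y ((n : ℤ) - 1))) =
      x n * y ((n : ℤ) - 1) := by
    rw [mul_assoc, hxe n]
    exact div_mul_cancel₀ _ (mul_ne_zero (hy n (by omega)) (hda n))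
  simpa using mul_riccatiDenom_eq (u := fun n : ℕ => x n * y ((n : ℤ) - 1))
    (fun n => mul_ne_zero (hx n (by omega)) (hy _ (by omega))) (by simpa using hrec) n

theorem mul_riccatiDenom_y (hx : ∀ n : ℤ, -1 ≤ n → x n ≠ 0) (hy : ∀ n : ℤ, -1 ≤ n → y n ≠ 0)
    (hdc : ∀ n : ℕ, c n + d n * (x ((n : ℤ) - 1) * y n) ≠ 0)
    (hye : ∀ n : ℕ, y ((n : ℤ) + 1) =
      x ((n : ℤ) - 1) * y n / (x n * (c n + d n * (x ((n : ℤ) - 1) * y n))))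
    (n : ℕ) :
    x ((n : ℤ) - 1) * y n * riccatiDenom c d (x (-1) * y 0) n = x (-1) * y 0 := by
  have hrec (n : ℕ) : x n * y ((n : ℤ) + 1) * (c n + d n * (x ((n : ℤ) - 1) * y n)) =
      x ((n : ℤ) - 1) * y n := by
    rw [mul_comm (x n), mul_assoc, hye n]
    exact div_mul_cancel₀ _ (mul_ne_zero (hx n (by omega)) (hdc n))
  simpa using mul_riccatiDenom_eq (u := fun n : ℕ => x ((n : ℤ) - 1) * y n)
    (fun n => mul_ne_zero (hx _ (by omega)) (hy n (by omega))) (by simpa using hrec) n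

theorem x_two_mul_succ_eq (hx : ∀ n : ℤ, -1 ≤ n → x n ≠ 0) (hy : ∀ n : ℤ, -1 ≤ n → y n ≠ 0)
    (hda : ∀ n : ℕ, a n + b n * (x n * y ((n : ℤ) - 1)) ≠ 0)
    (hdc : ∀ n : ℕ, c n + d n * (x ((n : ℤ) - 1) * y n) ≠ 0)
    (hxe : ∀ n : ℕ, x ((n : ℤ) + 1) =
      x n * y ((n : ℤ) - 1) / (y n * (a n + b n * (x n * y ((n : ℤ) - 1)))))
    (hye : ∀ n : ℕ, y ((n : ℤ) + 1) =
      x ((n : ℤ) - 1) * y n / (x n * (c n + d n * (x ((n : ℤ) - 1) * y n))))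
    (n : ℕ) :
    x (2 * ((n + 1 : ℕ) : ℤ)) = x (2 * (n : ℤ)) * (x 0 * (y (-1) / (x (-1) * y 0))) *
      (riccatiDenom c d (x (-1) * y 0) (2 * n + 1) / riccatiDenom a b (x 0 * y (-1)) (2 * n + 2)) := by
  have hu := mul_riccatiDenom_x hx hy hda hxe (2 * n + 2)
  have hv := mul_riccatiDenom_y hx hy hdc hye (2 * n + 1)
  have hDu : riccatiDenom a b (x 0 * y (-1)) (2 * n + 2) ≠ 0 := by
    intro h
    rw [h, mul_zero] at hu
    exact mul_ne_zero (hx 0 (by norm_num)) (hy (-1) (by norm_num)) hu.symm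
  have hxm1 : x (-1) ≠ 0 := hx (-1) (by norm_num)
  have hy0 : y 0 ≠ 0 := hy 0 (by norm_num)
  have hyodd : y (2 * n + 1) ≠ 0 := hy _ (by omega)
  push_cast at hu hv ⊢
  rw [show 2 * (n : ℤ) + 2 - 1 = 2 * n + 1 by ring] at hu
  rw [show 2 * (n : ℤ) + 1 - 1 = 2 * n by ring] at hv
  rw [show 2 * ((n : ℤ) + 1) = 2 * n + 2 by ring]
  field_simp
  refine mul_right_cancel₀ hyodd ?_
  linear_combination (x (-1) * y 0) * hu - (x 0 * y (-1)) * hv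

end System

theorem stmt_6 (x y : ℤ → ℝ) (a b c d : ℕ → ℝ)
    (hx : ∀ n : ℤ, -1 ≤ n → x n ≠ 0) (hy : ∀ n : ℤ, -1 ≤ n → y n ≠ 0)
    (hda : ∀ n : ℕ, a n + b n * (x n * y ((n : ℤ) - 1)) ≠ 0)
    (hdc : ∀ n : ℕ, c n + d n * (x ((n : ℤ) - 1) * y n) ≠ 0)
    (hxe : ∀ n : ℕ, x ((n : ℤ) + 1) =
      x n * y ((n : ℤ) - 1) / (y n * (a n + b n * (x n * y ((n : ℤ) - 1)))))
    (hye : ∀ n : ℕ, y ((n : ℤ) + 1) =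
      x ((n : ℤ) - 1) * y n / (x n * (c n + d n * (x ((n : ℤ) - 1) * y n)))) :
    ∀ n : ℕ, x (2 * (n : ℤ)) =
      x 0 ^ (n + 1) * (y (-1) / (x (-1) * y 0)) ^ n *
        ∏ s ∈ Finset.range n,
          ((∏ k ∈ Finset.range (2 * s + 1), c k) +
              x (-1) * y 0 * ∑ l ∈ Finset.range (2 * s + 1), d l * ∏ k ∈ Finset.Ico (l + 1) (2 * s + 1), c k) /
          ((∏ k ∈ Finset.range (2 * s + 2), a k) +
              x 0 * y (-1) * ∑ l ∈ Finset.range (2 * s + 2), b l * ∏ k ∈ Finset.Ico (l + 1) (2 * s + 2), a k) := by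
  intro n
  rw [eq_mul_pow_mul_prod_of_succ (f := fun n : ℕ => x (2 * (n : ℤ)))
    (x_two_mul_succ_eq hx hy hda hdc hxe hye) n]
  simp only [riccatiDenom, Nat.cast_zero, mul_zero]
  ring
end

section
/- Suppose (x_n)_{n≥-1}, (y_n)_{n≥-1} solve the system with x_n ≠ 0 and y_n ≠ 0 for all n. Then for every n ≥ 0, y_{2n-1} = y_{-1}^{1-n}·(x_{-1}·y_0/x_0)^n·∏_{s=0}^{n-1} [(∏_{k=0}^{2s-1} a_k + x_0·y_{-1}·∑_{l=0}^{2s-1} b_l·∏_{k=l+1}^{2s-1} a_k) / (∏_{k=0}^{2s} c_k + x_{-1}·y_0·∑_{l=0}^{2s} d_l·∏_{k=l+1}^{2s} c_k)], where y_{-1}^{1-n} denotes an integer power of the nonzero real y_{-1}. -/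
/-!
The products `u n = x n * y (n - 1)` and `v n = x (n - 1) * y n` each satisfy a decoupled
recurrence `u (n + 1) = u n / (a n + b n * u n)`, which becomes linear for `u 0 / u n`; solving
it gives `u` and `v` in closed form. Since `v (n + 1) / u n = y (n + 1) / y (n - 1)`, the odd
terms of `y` are then a telescoping product.
-/

open Finset

section AffineRecurrence

variable {R : Type*} [CommRing R]

/-- The solution of `w (m + 1) = a m * w m + b m * β` with `w 0 = 1`. -/
def affineRecSol (a b : ℕ → R) (β : R) (m : ℕ) : R :=
  ∏ k ∈ range m, a k + β * ∑ l ∈ range m, b l * ∏ k ∈ Ico (l + 1) m, a k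

@[simp]
lemma affineRecSol_zero (a b : ℕ → R) (β : R) : affineRecSol a b β 0 = 1 := by
  simp [affineRecSol]

lemma affineRecSol_succ (a b : ℕ → R) (β : R) (m : ℕ) :
    affineRecSol a b β (m + 1) = a m * affineRecSol a b β m + b m * β := by
  have hIco : ∀ l ∈ range m, b l * ∏ k ∈ Ico (l + 1) (m + 1), a k
      = (b l * ∏ k ∈ Ico (l + 1) m, a k) * a m := fun l hl => by
    rw [prod_Ico_succ_top (by simpa using hl), mul_assoc]
  simp only [affineRecSol, prod_range_succ, sum_range_succ, sum_congr rfl hIco, ← sum_mul,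
    Ico_self, prod_empty]
  ring

end AffineRecurrence

lemma mul_affineRecSol_eq {K : Type*} [Field K] {a b u : ℕ → K} (hden : ∀ n, a n + b n * u n ≠ 0)
    (hu : ∀ n, u (n + 1) = u n / (a n + b n * u n)) (m : ℕ) :
    u m * affineRecSol a b (u 0) m = u 0 := by
  induction m with
  | zero => simp
  | succ m ih =>
    rw [affineRecSol_succ, hu m, div_mul_eq_mul_div, div_eq_iff (hden m)]
    linear_combination a m * ih

lemma eq_mul_prod_range_of_succ {M : Type*} [CommMonoid M] {f g : ℕ → M}
    (h : ∀ n, f (n + 1) = f n * g n) (n : ℕ) : f n = f 0 * ∏ i ∈ range n, g i := by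
  induction n with
  | zero => simp
  | succ n ih => rw [h, ih, prod_range_succ, mul_assoc]

section CrossProd

variable {K : Type*} [Field K]

def crossProd (x y : ℤ → K) (n : ℕ) : K := x n * y (n - 1)

lemma crossProd_zero (x y : ℤ → K) : crossProd x y 0 = x 0 * y (-1) := by
  simp [crossProd]

lemma crossProd_succ {x y : ℤ → K} {a b : ℕ → K} (hy : ∀ n : ℕ, y n ≠ 0)
    (hxe : ∀ n : ℕ, x ((n : ℤ) + 1) = crossProd x y n / (y n * (a n + b n * crossProd x y n)))
    (n : ℕ) : crossProd x y (n + 1) = crossProd x y n / (a n + b n * crossProd x y n) := by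
  rw [crossProd, Nat.cast_succ, add_sub_cancel_right, hxe, div_mul_eq_mul_div, mul_comm,
    mul_div_mul_left _ _ (hy n)]

lemma crossProd_mul_y_succ (x y : ℤ → K) (n : ℕ) :
    crossProd x y n * y ((n : ℤ) + 1) = y ((n : ℤ) - 1) * crossProd y x (n + 1) := by
  simp only [crossProd, Nat.cast_succ, add_sub_cancel_right]
  ring

lemma apply_two_mul_add_one_eq {x y : ℤ → K} {a b c d : ℕ → K}
    (hu0 : crossProd x y 0 ≠ 0) (hv0 : crossProd y x 0 ≠ 0)
    (hu : ∀ m, crossProd x y m * affineRecSol a b (crossProd x y 0) m = crossProd x y 0)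
    (hv : ∀ m, crossProd y x m * affineRecSol c d (crossProd y x 0) m = crossProd y x 0)
    (s : ℕ) :
    y (2 * s + 1) = y (2 * s - 1) * (crossProd y x 0 / crossProd x y 0 *
      (affineRecSol a b (crossProd x y 0) (2 * s) /
        affineRecSol c d (crossProd y x 0) (2 * s + 1))) := by
  have key := crossProd_mul_y_succ x y (2 * s)
  push_cast at key
  have hC : affineRecSol c d (crossProd y x 0) (2 * s + 1) ≠ 0 :=
    fun h => hv0 (by rw [← hv (2 * s + 1), h, mul_zero])
  set A := affineRecSol a b (crossProd x y 0) (2 * s)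
  set C := affineRecSol c d (crossProd y x 0) (2 * s + 1)
  field_simp
  linear_combination
    A * C * key - y (2 * s + 1) * C * hu (2 * s) + y (2 * s - 1) * A * hv (2 * s + 1)

lemma apply_two_mul_sub_one_eq_prod {x y : ℤ → K} {a b c d : ℕ → K}
    (hu0 : crossProd x y 0 ≠ 0) (hv0 : crossProd y x 0 ≠ 0)
    (hu : ∀ m, crossProd x y m * affineRecSol a b (crossProd x y 0) m = crossProd x y 0)
    (hv : ∀ m, crossProd y x m * affineRecSol c d (crossProd y x 0) m = crossProd y x 0)
    (n : ℕ) :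
    y (2 * n - 1) = y (-1) * (crossProd y x 0 / crossProd x y 0) ^ n *
      ∏ s ∈ range n, affineRecSol a b (crossProd x y 0) (2 * s) /
        affineRecSol c d (crossProd y x 0) (2 * s + 1) := by
  have hstep (s : ℕ) : y (2 * ((s + 1 : ℕ) : ℤ) - 1) = y (2 * s - 1) *
      (crossProd y x 0 / crossProd x y 0 * (affineRecSol a b (crossProd x y 0) (2 * s) /
        affineRecSol c d (crossProd y x 0) (2 * s + 1))) := by
    rw [← apply_two_mul_add_one_eq hu0 hv0 hu hv]
    congr 1
    push_cast
    ring
  rw [eq_mul_prod_range_of_succ (f := fun n : ℕ => y (2 * (n : ℤ) - 1)) hstep n,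
    prod_mul_distrib, prod_const, card_range]
  simp [mul_assoc]

end CrossProd

theorem stmt_7 (x y : ℤ → ℝ) (a b c d : ℕ → ℝ)
    (hx : ∀ n : ℤ, -1 ≤ n → x n ≠ 0) (hy : ∀ n : ℤ, -1 ≤ n → y n ≠ 0)
    (hda : ∀ n : ℕ, a n + b n * (x n * y ((n : ℤ) - 1)) ≠ 0)
    (hdc : ∀ n : ℕ, c n + d n * (x ((n : ℤ) - 1) * y n) ≠ 0)
    (hxe : ∀ n : ℕ, x ((n : ℤ) + 1) =
      x n * y ((n : ℤ) - 1) / (y n * (a n + b n * (x n * y ((n : ℤ) - 1)))))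
    (hye : ∀ n : ℕ, y ((n : ℤ) + 1) =
      x ((n : ℤ) - 1) * y n / (x n * (c n + d n * (x ((n : ℤ) - 1) * y n)))) :
    ∀ n : ℕ, y (2 * (n : ℤ) - 1) =
      y (-1) ^ (1 - (n : ℤ)) * (x (-1) * y 0 / x 0) ^ n *
        ∏ s ∈ Finset.range n,
          ((∏ k ∈ Finset.range (2 * s), a k) +
              x 0 * y (-1) * ∑ l ∈ Finset.range (2 * s), b l * ∏ k ∈ Finset.Ico (l + 1) (2 * s), a k) /
          ((∏ k ∈ Finset.range (2 * s + 1), c k) +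
              x (-1) * y 0 * ∑ l ∈ Finset.range (2 * s + 1), d l * ∏ k ∈ Finset.Ico (l + 1) (2 * s + 1), c k) := by
  intro n
  have hcomm : ∀ n : ℕ, x ((n : ℤ) - 1) * y n = crossProd y x n := fun n => mul_comm _ _
  have hx0 := hx 0 (by norm_num)
  have hy1 := hy (-1) (by norm_num)
  have hu0 : crossProd x y 0 ≠ 0 := by rw [crossProd_zero]; exact mul_ne_zero hx0 hy1
  have hv0 : crossProd y x 0 ≠ 0 := by
    rw [crossProd_zero]; exact mul_ne_zero (hy 0 (by norm_num)) (hx (-1) (by norm_num))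
  have hu := mul_affineRecSol_eq (u := crossProd x y) hda
    (crossProd_succ (fun n => hy n (by omega)) hxe)
  have hv := mul_affineRecSol_eq (u := crossProd y x) (fun n => hcomm n ▸ hdc n)
    (crossProd_succ (fun n => hx n (by omega)) fun n => by rw [hye, hcomm])
  rw [apply_two_mul_sub_one_eq_prod hu0 hv0 hu hv, crossProd_zero, crossProd_zero, mul_comm (y 0)]
  congr 1
  rw [zpow_sub₀ hy1, zpow_one, zpow_natCast, div_pow, div_pow, mul_pow]
  field_simp
  ring
end

section
/- Suppose (x_n)_{n≥-1}, (y_n)_{n≥-1} solve the system with x_n ≠ 0 and y_n ≠ 0 for all n. Then for every n ≥ 0, y_{2n} = y_0^{n+1}·(x_{-1}/(x_0·y_{-1}))^n·∏_{s=0}^{n-1} [(∏_{k=0}^{2s} a_k + x_0·y_{-1}·∑_{l=0}^{2s} b_l·∏_{k=l+1}^{2s} a_k) / (∏_{k=0}^{2s+1} c_k + x_{-1}·y_0·∑_{l=0}^{2s+1} d_l·∏_{k=l+1}^{2s+1} c_k)]. -/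
/-- Closed-form expression for the linearized recurrence. -/
def stmt8Aux (a b : ℕ → ℝ) (u : ℝ) (m : ℕ) : ℝ :=
  (∏ k ∈ Finset.range m, a k) +
    u * ∑ l ∈ Finset.range m, b l * ∏ k ∈ Finset.Ico (l + 1) m, a k

lemma stmt8Aux_zero (a b : ℕ → ℝ) (u : ℝ) : stmt8Aux a b u 0 = 1 := by
  simp [stmt8Aux]

lemma stmt8Aux_succ (a b : ℕ → ℝ) (u : ℝ) (m : ℕ) :
    stmt8Aux a b u (m + 1) = a m * stmt8Aux a b u m + b m * u := by
  unfold stmt8Aux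
  rw [Finset.prod_range_succ, Finset.sum_range_succ]
  have h1 : ∀ l ∈ Finset.range m,
      b l * ∏ k ∈ Finset.Ico (l + 1) (m + 1), a k
        = (b l * ∏ k ∈ Finset.Ico (l + 1) m, a k) * a m := by
    intro l hl
    have hl' := Finset.mem_range.mp hl
    rw [Finset.prod_Ico_succ_top (by omega : l + 1 ≤ m)]
    ring
  rw [Finset.sum_congr rfl h1, ← Finset.sum_mul]
  simp [Finset.Ico_self]
  ring

lemma stmt8Key (a b : ℕ → ℝ) (w : ℕ → ℝ) (hw : ∀ m, w m ≠ 0)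
    (hrec : ∀ m, w (m + 1) * (a m + b m * w m) = w m) :
    ∀ m, w m * stmt8Aux a b (w 0) m = w 0 := by
  intro m
  induction m with
  | zero => simp [stmt8Aux_zero]
  | succ m ih =>
    have h := hrec m
    rw [stmt8Aux_succ]
    apply mul_left_cancel₀ (hw m)
    linear_combination (w (m + 1) * a m) * ih + w 0 * h

theorem stmt_8 (x y : ℤ → ℝ) (a b c d : ℕ → ℝ)
    (hx : ∀ n : ℤ, -1 ≤ n → x n ≠ 0) (hy : ∀ n : ℤ, -1 ≤ n → y n ≠ 0)
    (hda : ∀ n : ℕ, a n + b n * (x n * y ((n : ℤ) - 1)) ≠ 0)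
    (hdc : ∀ n : ℕ, c n + d n * (x ((n : ℤ) - 1) * y n) ≠ 0)
    (hxe : ∀ n : ℕ, x ((n : ℤ) + 1) =
      x n * y ((n : ℤ) - 1) / (y n * (a n + b n * (x n * y ((n : ℤ) - 1)))))
    (hye : ∀ n : ℕ, y ((n : ℤ) + 1) =
      x ((n : ℤ) - 1) * y n / (x n * (c n + d n * (x ((n : ℤ) - 1) * y n)))) :
    ∀ n : ℕ, y (2 * (n : ℤ)) =
      y 0 ^ (n + 1) * (x (-1) / (x 0 * y (-1))) ^ n *
        ∏ s ∈ Finset.range n,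
          ((∏ k ∈ Finset.range (2 * s + 1), a k) +
              x 0 * y (-1) * ∑ l ∈ Finset.range (2 * s + 1), b l * ∏ k ∈ Finset.Ico (l + 1) (2 * s + 1), a k) /
          ((∏ k ∈ Finset.range (2 * s + 2), c k) +
              x (-1) * y 0 * ∑ l ∈ Finset.range (2 * s + 2), d l * ∏ k ∈ Finset.Ico (l + 1) (2 * s + 2), c k) := by
  have hxn : ∀ m : ℕ, x (m : ℤ) ≠ 0 := fun m => hx m (by omega)
  have hyn : ∀ m : ℕ, y (m : ℤ) ≠ 0 := fun m => hy m (by omega)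
  have hxm : ∀ m : ℕ, x ((m : ℤ) - 1) ≠ 0 := fun m => hx _ (by omega)
  have hym : ∀ m : ℕ, y ((m : ℤ) - 1) ≠ 0 := fun m => hy _ (by omega)
  have hUne : ∀ m : ℕ, x (m : ℤ) * y ((m : ℤ) - 1) ≠ 0 :=
    fun m => mul_ne_zero (hxn m) (hym m)
  have hVne : ∀ m : ℕ, x ((m : ℤ) - 1) * y (m : ℤ) ≠ 0 :=
    fun m => mul_ne_zero (hxm m) (hyn m)
  have hUrec : ∀ m : ℕ, x ((m + 1 : ℕ) : ℤ) * y (((m + 1 : ℕ) : ℤ) - 1) *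
      (a m + b m * (x (m : ℤ) * y ((m : ℤ) - 1))) = x (m : ℤ) * y ((m : ℤ) - 1) := by
    intro m
    have hc1 : ((m + 1 : ℕ) : ℤ) = (m : ℤ) + 1 := by push_cast; ring
    have hc2 : ((m + 1 : ℕ) : ℤ) - 1 = (m : ℤ) := by push_cast; ring
    have hne : y (m : ℤ) * (a m + b m * (x (m : ℤ) * y ((m : ℤ) - 1))) ≠ 0 :=
      mul_ne_zero (hyn m) (hda m)
    rw [hc2, hc1, hxe m, div_mul_eq_mul_div, div_mul_eq_mul_div, div_eq_iff hne]
    ring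
  have hVrec : ∀ m : ℕ, x (((m + 1 : ℕ) : ℤ) - 1) * y ((m + 1 : ℕ) : ℤ) *
      (c m + d m * (x ((m : ℤ) - 1) * y (m : ℤ))) = x ((m : ℤ) - 1) * y (m : ℤ) := by
    intro m
    have hc1 : ((m + 1 : ℕ) : ℤ) = (m : ℤ) + 1 := by push_cast; ring
    have hc2 : ((m + 1 : ℕ) : ℤ) - 1 = (m : ℤ) := by push_cast; ring
    have hne : x (m : ℤ) * (c m + d m * (x ((m : ℤ) - 1) * y (m : ℤ))) ≠ 0 :=
      mul_ne_zero (hxn m) (hdc m)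
    rw [hc2, hc1, hye m, mul_div_assoc', div_mul_eq_mul_div, div_eq_iff hne]
    ring
  have hU : ∀ m : ℕ, x (m : ℤ) * y ((m : ℤ) - 1) *
      stmt8Aux a b (x 0 * y (-1)) m = x 0 * y (-1) := by
    intro m
    have h := stmt8Key a b (fun m => x (m : ℤ) * y ((m : ℤ) - 1)) hUne hUrec m
    norm_num at h
    convert h using 3 <;> norm_num
  have hV : ∀ m : ℕ, x ((m : ℤ) - 1) * y (m : ℤ) *
      stmt8Aux c d (x (-1) * y 0) m = x (-1) * y 0 := by
    intro m
    have h := stmt8Key c d (fun m => x ((m : ℤ) - 1) * y (m : ℤ)) hVne hVrec m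
    norm_num at h
    convert h using 3 <;> norm_num
  have hAne : ∀ m : ℕ, stmt8Aux a b (x 0 * y (-1)) m ≠ 0 := by
    intro m h
    have h2 := hU m
    rw [h, mul_zero] at h2
    exact mul_ne_zero (hx 0 (by omega)) (hy (-1) (by omega)) h2.symm
  have hCne : ∀ m : ℕ, stmt8Aux c d (x (-1) * y 0) m ≠ 0 := by
    intro m h
    have h2 := hV m
    rw [h, mul_zero] at h2
    exact mul_ne_zero (hx (-1) (by omega)) (hy 0 (by omega)) h2.symm
  intro n
  induction n with
  | zero => norm_num
  | succ n ih =>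
    rw [Finset.prod_range_succ, pow_succ, pow_succ]
    have hfac :
        ((∏ k ∈ Finset.range (2 * n + 1), a k) +
              x 0 * y (-1) * ∑ l ∈ Finset.range (2 * n + 1), b l * ∏ k ∈ Finset.Ico (l + 1) (2 * n + 1), a k) /
          ((∏ k ∈ Finset.range (2 * n + 2), c k) +
              x (-1) * y 0 * ∑ l ∈ Finset.range (2 * n + 2), d l * ∏ k ∈ Finset.Ico (l + 1) (2 * n + 2), c k)
        = stmt8Aux a b (x 0 * y (-1)) (2 * n + 1) / stmt8Aux c d (x (-1) * y 0) (2 * n + 2) := rfl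
    rw [hfac]
    have key1 : x ((2 * n + 1 : ℕ) : ℤ) * y (2 * ((n : ℤ) + 1)) *
        stmt8Aux c d (x (-1) * y 0) (2 * n + 2) = x (-1) * y 0 := by
      have h := hV (2 * n + 2)
      have e1 : ((2 * n + 2 : ℕ) : ℤ) - 1 = ((2 * n + 1 : ℕ) : ℤ) := by push_cast; ring
      have e2 : ((2 * n + 2 : ℕ) : ℤ) = 2 * ((n : ℤ) + 1) := by push_cast; ring
      rw [e1, e2] at h
      exact h
    have key2 : x ((2 * n + 1 : ℕ) : ℤ) * y (2 * (n : ℤ)) *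
        stmt8Aux a b (x 0 * y (-1)) (2 * n + 1) = x 0 * y (-1) := by
      have h := hU (2 * n + 1)
      have e1 : ((2 * n + 1 : ℕ) : ℤ) - 1 = 2 * (n : ℤ) := by push_cast; ring
      rw [e1] at h
      exact h
    have hcastg : 2 * ((↑(n + 1) : ℤ)) = 2 * ((n : ℤ) + 1) := by push_cast; ring
    rw [hcastg]
    have step : y (2 * ((n : ℤ) + 1)) =
        y (2 * (n : ℤ)) * y 0 * (x (-1) / (x 0 * y (-1))) *
          (stmt8Aux a b (x 0 * y (-1)) (2 * n + 1) / stmt8Aux c d (x (-1) * y 0) (2 * n + 2)) := by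
      apply mul_left_cancel₀ (hxn (2 * n + 1))
      rw [show x ((2 * n + 1 : ℕ) : ℤ) * (y (2 * (n : ℤ)) * y 0 * (x (-1) / (x 0 * y (-1))) *
            (stmt8Aux a b (x 0 * y (-1)) (2 * n + 1) / stmt8Aux c d (x (-1) * y 0) (2 * n + 2)))
          = (x ((2 * n + 1 : ℕ) : ℤ) * y (2 * (n : ℤ)) * stmt8Aux a b (x 0 * y (-1)) (2 * n + 1)) *
            (y 0 * x (-1)) / ((x 0 * y (-1)) * stmt8Aux c d (x (-1) * y 0) (2 * n + 2)) from by ring,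
        key2, eq_div_iff (mul_ne_zero (mul_ne_zero (hx 0 (by omega)) (hy (-1) (by omega))) (hCne (2 * n + 2)))]
      linear_combination (x 0 * y (-1)) * key1
    rw [step, ih]
    ring
end

section
/- Let a, b, c, d be real constants and suppose (x_n)_{n≥-1}, (y_n)_{n≥-1} solve the constant-coefficient system with x_n ≠ 0 and y_n ≠ 0 for all n. Then for every n ≥ 0, x_{2n-1} = x_{-1}^{1-n}·(x_0·y_{-1}/y_0)^n·∏_{s=0}^{n-1} [(c^{2s} + d·x_{-1}·y_0·∑_{l=0}^{2s-1} c^l) / (a^{2s+1} + b·x_0·y_{-1}·∑_{l=0}^{2s} a^l)], where x_{-1}^{1-n} denotes an integer power of the nonzero real x_{-1}. -/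
/-!
With `u n = x n * y (n - 1)` and `v n = x (n - 1) * y n` the system decouples into the Riccati
equations `u (n + 1) = u n / (a + b * u n)` and `v (n + 1) = v n / (c + d * v n)`. These are
linear in `1 / u` and `1 / v`, which gives `u n * (a ^ n + b * u 0 * ∑ l < n, a ^ l) = u 0` and
the analogue for `v`. Since `x (n + 1) / x (n - 1) = u (n + 1) / v n`, the odd-indexed terms
telescope into the stated product.
-/

open Finset

theorem mul_pow_add_geom_sum_eq_of_mul_affine {R : Type*} [CommRing R] {u : ℕ → R} {a b : R}
    (h : ∀ n, u (n + 1) * (a + b * u n) = u n) (n : ℕ) :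
    u n * (a ^ n + b * u 0 * ∑ l ∈ range n, a ^ l) = u 0 := by
  induction n with
  | zero => simp
  | succ n ih =>
    rw [geom_sum_succ, pow_succ]
    linear_combination (a ^ n + b * u 0 * ∑ l ∈ range n, a ^ l) * h n + (1 - b * u (n + 1)) * ih

namespace RationalDifferenceSystem

variable {K : Type*} [Field K] {x y : ℤ → K} {a b c d : K}

theorem x_mul_y_sub_one_closedForm (hy : ∀ n : ℤ, -1 ≤ n → y n ≠ 0)
    (hda : ∀ n : ℕ, a + b * (x n * y ((n : ℤ) - 1)) ≠ 0)
    (hxe : ∀ n : ℕ, x ((n : ℤ) + 1) =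
      x n * y ((n : ℤ) - 1) / (y n * (a + b * (x n * y ((n : ℤ) - 1))))) (n : ℕ) :
    x n * y ((n : ℤ) - 1) * (a ^ n + b * x 0 * y (-1) * ∑ l ∈ range n, a ^ l) =
      x 0 * y (-1) := by
  have step (n : ℕ) : x ((n : ℤ) + 1) * y n * (a + b * (x n * y ((n : ℤ) - 1))) =
      x n * y ((n : ℤ) - 1) := by
    rw [hxe n, mul_assoc, div_mul_cancel₀ _ (mul_ne_zero (hy n (by omega)) (hda n))]
  simpa [mul_assoc] using mul_pow_add_geom_sum_eq_of_mul_affine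
    (u := fun n : ℕ => x n * y ((n : ℤ) - 1)) (fun n => by push_cast; simpa using step n) n

theorem x_sub_one_mul_y_closedForm (hx : ∀ n : ℤ, -1 ≤ n → x n ≠ 0)
    (hdc : ∀ n : ℕ, c + d * (x ((n : ℤ) - 1) * y n) ≠ 0)
    (hye : ∀ n : ℕ, y ((n : ℤ) + 1) =
      x ((n : ℤ) - 1) * y n / (x n * (c + d * (x ((n : ℤ) - 1) * y n)))) (n : ℕ) :
    x ((n : ℤ) - 1) * y n * (c ^ n + d * x (-1) * y 0 * ∑ l ∈ range n, c ^ l) =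
      x (-1) * y 0 := by
  have step (n : ℕ) : x n * y ((n : ℤ) + 1) * (c + d * (x ((n : ℤ) - 1) * y n)) =
      x ((n : ℤ) - 1) * y n := by
    rw [hye n, mul_comm (x n), mul_assoc,
      div_mul_cancel₀ _ (mul_ne_zero (hx n (by omega)) (hdc n))]
  simpa [mul_assoc] using mul_pow_add_geom_sum_eq_of_mul_affine
    (u := fun n : ℕ => x ((n : ℤ) - 1) * y n) (fun n => by push_cast; simpa using step n) n

theorem x_add_one_eq (hx : ∀ n : ℤ, -1 ≤ n → x n ≠ 0) (hy : ∀ n : ℤ, -1 ≤ n → y n ≠ 0)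
    (hda : ∀ n : ℕ, a + b * (x n * y ((n : ℤ) - 1)) ≠ 0)
    (hdc : ∀ n : ℕ, c + d * (x ((n : ℤ) - 1) * y n) ≠ 0)
    (hxe : ∀ n : ℕ, x ((n : ℤ) + 1) =
      x n * y ((n : ℤ) - 1) / (y n * (a + b * (x n * y ((n : ℤ) - 1)))))
    (hye : ∀ n : ℕ, y ((n : ℤ) + 1) =
      x ((n : ℤ) - 1) * y n / (x n * (c + d * (x ((n : ℤ) - 1) * y n)))) (n : ℕ) :
    x ((n : ℤ) + 1) = x ((n : ℤ) - 1) * (x (-1))⁻¹ * (x 0 * y (-1) / y 0) *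
      ((c ^ n + d * x (-1) * y 0 * ∑ l ∈ range n, c ^ l) /
        (a ^ (n + 1) + b * x 0 * y (-1) * ∑ l ∈ range (n + 1), a ^ l)) := by
  have hu := x_mul_y_sub_one_closedForm hy hda hxe (n + 1)
  have hv := x_sub_one_mul_y_closedForm hx hdc hye n
  push_cast at hu
  rw [add_sub_cancel_right] at hu
  have hx_neg_one := hx (-1) le_rfl
  have hy₀ := hy 0 (by norm_num)
  have hD := right_ne_zero_of_mul (hu ▸ mul_ne_zero (hx 0 (by norm_num)) (hy (-1) le_rfl))
  have hE := right_ne_zero_of_mul (hv ▸ mul_ne_zero hx_neg_one hy₀)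
  calc x ((n : ℤ) + 1)
      = x ((n : ℤ) - 1) * (x ((n : ℤ) + 1) * y n) / (x ((n : ℤ) - 1) * y n) := by
        field_simp [hx ((n : ℤ) - 1) (by omega), hy n (by omega)]
    _ = _ := by
        rw [eq_div_of_mul_eq hD hu, eq_div_of_mul_eq hE hv]
        field_simp

end RationalDifferenceSystem

theorem stmt_9 (x y : ℤ → ℝ) (a b c d : ℝ)
    (hx : ∀ n : ℤ, -1 ≤ n → x n ≠ 0) (hy : ∀ n : ℤ, -1 ≤ n → y n ≠ 0)
    (hda : ∀ n : ℕ, a + b * (x n * y ((n : ℤ) - 1)) ≠ 0)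
    (hdc : ∀ n : ℕ, c + d * (x ((n : ℤ) - 1) * y n) ≠ 0)
    (hxe : ∀ n : ℕ, x ((n : ℤ) + 1) =
      x n * y ((n : ℤ) - 1) / (y n * (a + b * (x n * y ((n : ℤ) - 1)))))
    (hye : ∀ n : ℕ, y ((n : ℤ) + 1) =
      x ((n : ℤ) - 1) * y n / (x n * (c + d * (x ((n : ℤ) - 1) * y n)))) :
    ∀ n : ℕ, x (2 * (n : ℤ) - 1) =
      x (-1) ^ (1 - (n : ℤ)) * (x 0 * y (-1) / y 0) ^ n *
        ∏ s ∈ Finset.range n,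
          (c ^ (2 * s) + d * x (-1) * y 0 * ∑ l ∈ Finset.range (2 * s), c ^ l) /
          (a ^ (2 * s + 1) + b * x 0 * y (-1) * ∑ l ∈ Finset.range (2 * s + 1), a ^ l) := by
  intro n
  induction n with
  | zero => simp
  | succ n ih =>
    have hstep := RationalDifferenceSystem.x_add_one_eq hx hy hda hdc hxe hye (2 * n)
    push_cast at hstep ⊢
    rw [show 2 * ((n : ℤ) + 1) - 1 = 2 * n + 1 by ring, hstep, ih, prod_range_succ, pow_succ,
      show (1 : ℤ) - (n + 1) = 1 - n - 1 by ring, zpow_sub_one₀ (hx (-1) le_rfl)]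
    ring
end

section
/- Let a, b, c, d be real constants and suppose (x_n)_{n≥-1}, (y_n)_{n≥-1} solve the constant-coefficient system with x_n ≠ 0 and y_n ≠ 0 for all n. Then for every n ≥ 0, x_{2n} = x_0^{n+1}·(y_{-1}/(x_{-1}·y_0))^n·∏_{s=0}^{n-1} [(c^{2s+1} + d·x_{-1}·y_0·∑_{l=0}^{2s} c^l) / (a^{2s+2} + b·x_0·y_{-1}·∑_{l=0}^{2s+1} a^l)]. -/
/-!
Along a solution, the products `uₙ = xₙ yₙ₋₁` and `vₙ = xₙ₋₁ yₙ` each satisfy a decoupled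
first-order Möbius recurrence `uₙ₊₁ = uₙ / (a + b uₙ)`, which `1 / uₙ` linearises, so
`uₙ = u₀ / (aⁿ + b u₀ ∑_{l<n} aˡ)` and similarly for `vₙ` with `c, d`. Since
`xₙ₊₂ = xₙ uₙ₊₂ / vₙ₊₁`, the even terms of `x` form a telescoping product of these closed forms.
-/

open Finset

section MoebiusRecurrence

variable {K : Type*} [Field K] {u : ℕ → K} {a b : K}

theorem mul_pow_add_geom_sum_eq_of_eq_div_add (hu : ∀ n, u (n + 1) = u n / (a + b * u n))
    (hden : ∀ n, a + b * u n ≠ 0) (n : ℕ) :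
    u n * (a ^ n + b * u 0 * ∑ l ∈ range n, a ^ l) = u 0 := by
  induction n with
  | zero => simp
  | succ n ih =>
    rw [hu, pow_succ, geom_sum_succ, div_mul_eq_mul_div, div_eq_iff (hden n)]
    linear_combination a * ih

theorem eq_div_pow_add_geom_sum_of_eq_div_add (hu : ∀ n, u (n + 1) = u n / (a + b * u n))
    (hden : ∀ n, a + b * u n ≠ 0) (h0 : u 0 ≠ 0) (n : ℕ) :
    u n = u 0 / (a ^ n + b * u 0 * ∑ l ∈ range n, a ^ l) := by
  have h := mul_pow_add_geom_sum_eq_of_eq_div_add hu hden n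
  have hS : a ^ n + b * u 0 * ∑ l ∈ range n, a ^ l ≠ 0 := right_ne_zero_of_mul (by rwa [h])
  rw [eq_div_iff hS, h]

end MoebiusRecurrence

section LagProduct

variable {K : Type*} [Field K]

def lagProd (x y : ℤ → K) (n : ℕ) : K := x n * y (n - 1)

theorem lagProd_succ {x y : ℤ → K} {a b : K} (hy : ∀ n : ℕ, y n ≠ 0)
    (hxe : ∀ n : ℕ, x ((n : ℤ) + 1) =
      x n * y ((n : ℤ) - 1) / (y n * (a + b * (x n * y ((n : ℤ) - 1))))) (n : ℕ) :
    lagProd x y (n + 1) = lagProd x y n / (a + b * lagProd x y n) := by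
  simp only [lagProd, Nat.cast_succ, add_sub_cancel_right, hxe n]
  field_simp [hy n]

theorem eq_mul_lagProd_div_lagProd {x y : ℤ → K} {n : ℕ} (hx : x n ≠ 0) (hy : y (n + 1) ≠ 0) :
    x (n + 2 : ℕ) = x n * lagProd x y (n + 2) / lagProd y x (n + 1) := by
  simp only [lagProd]
  push_cast
  rw [show (n : ℤ) + 2 - 1 = n + 1 by ring, add_sub_cancel_right]
  field_simp

end LagProduct

theorem stmt_10 (x y : ℤ → ℝ) (a b c d : ℝ)
    (hx : ∀ n : ℤ, -1 ≤ n → x n ≠ 0) (hy : ∀ n : ℤ, -1 ≤ n → y n ≠ 0)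
    (hda : ∀ n : ℕ, a + b * (x n * y ((n : ℤ) - 1)) ≠ 0)
    (hdc : ∀ n : ℕ, c + d * (x ((n : ℤ) - 1) * y n) ≠ 0)
    (hxe : ∀ n : ℕ, x ((n : ℤ) + 1) =
      x n * y ((n : ℤ) - 1) / (y n * (a + b * (x n * y ((n : ℤ) - 1)))))
    (hye : ∀ n : ℕ, y ((n : ℤ) + 1) =
      x ((n : ℤ) - 1) * y n / (x n * (c + d * (x ((n : ℤ) - 1) * y n)))) :
    ∀ n : ℕ, x (2 * (n : ℤ)) =
      x 0 ^ (n + 1) * (y (-1) / (x (-1) * y 0)) ^ n *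
        ∏ s ∈ Finset.range n,
          (c ^ (2 * s + 1) + d * x (-1) * y 0 * ∑ l ∈ Finset.range (2 * s + 1), c ^ l) /
          (a ^ (2 * s + 2) + b * x 0 * y (-1) * ∑ l ∈ Finset.range (2 * s + 2), a ^ l) := by
  have hu := eq_div_pow_add_geom_sum_of_eq_div_add
    (lagProd_succ (fun n => hy n (by omega)) hxe) hda
    (by simpa [lagProd] using mul_ne_zero (hx 0 (by omega)) (hy (-1) (by omega)))
  have hv := eq_div_pow_add_geom_sum_of_eq_div_add
    (lagProd_succ (x := y) (y := x) (a := c) (b := d) (fun n => hx n (by omega))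
      (fun n => by rw [hye n]; ring))
    (fun n => by simpa only [lagProd, mul_comm] using hdc n)
    (by simpa [lagProd] using mul_ne_zero (hy 0 (by omega)) (hx (-1) (by omega)))
  intro n
  induction n with
  | zero => simp
  | succ n ih =>
    have hstep := eq_mul_lagProd_div_lagProd (x := x) (y := y) (n := 2 * n)
      (hx _ (by omega)) (hy _ (by omega))
    rw [hu, hv] at hstep
    push_cast at hstep ⊢
    rw [mul_add_one, hstep, div_div_eq_mul_div, ih, prod_range_succ]
    simp only [lagProd, Nat.cast_zero, zero_sub]
    ring
end

section
/- Let a, b, c, d be real constants and suppose (x_n)_{n≥-1}, (y_n)_{n≥-1} solve the constant-coefficient system with x_n ≠ 0 and y_n ≠ 0 for all n. Then for every n ≥ 0, y_{2n-1} = y_{-1}^{1-n}·(x_{-1}·y_0/x_0)^n·∏_{s=0}^{n-1} [(a^{2s} + b·x_0·y_{-1}·∑_{l=0}^{2s-1} a^l) / (c^{2s+1} + d·x_{-1}·y_0·∑_{l=0}^{2s} c^l)], where y_{-1}^{1-n} denotes an integer power of the nonzero real y_{-1}. -/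
lemma aux_closed (u : ℕ → ℝ) (a b : ℝ)
    (hd : ∀ n, a + b * u n ≠ 0)
    (hstep : ∀ n, u (n + 1) = u n / (a + b * u n)) :
    ∀ n, (a ^ n + b * u 0 * ∑ l ∈ Finset.range n, a ^ l) ≠ 0 ∧
      u n = u 0 / (a ^ n + b * u 0 * ∑ l ∈ Finset.range n, a ^ l) := by
  intro n
  induction n with
  | zero => simp
  | succ n ih =>
    obtain ⟨hD, hun⟩ := ih
    have hkey : a ^ (n + 1) + b * u 0 * ∑ l ∈ Finset.range (n + 1), a ^ l
        = (a + b * u n) * (a ^ n + b * u 0 * ∑ l ∈ Finset.range n, a ^ l) := by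
      rw [geom_sum_succ, hun]
      field_simp
      ring
    have hD' : (a ^ (n + 1) + b * u 0 * ∑ l ∈ Finset.range (n + 1), a ^ l) ≠ 0 := by
      rw [hkey]; exact mul_ne_zero (hd n) hD
    refine ⟨hD', ?_⟩
    rw [hstep n, hkey, hun, div_div]
    ring

theorem stmt_11 (x y : ℤ → ℝ) (a b c d : ℝ)
    (hx : ∀ n : ℤ, -1 ≤ n → x n ≠ 0) (hy : ∀ n : ℤ, -1 ≤ n → y n ≠ 0)
    (hda : ∀ n : ℕ, a + b * (x n * y ((n : ℤ) - 1)) ≠ 0)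
    (hdc : ∀ n : ℕ, c + d * (x ((n : ℤ) - 1) * y n) ≠ 0)
    (hxe : ∀ n : ℕ, x ((n : ℤ) + 1) =
      x n * y ((n : ℤ) - 1) / (y n * (a + b * (x n * y ((n : ℤ) - 1)))))
    (hye : ∀ n : ℕ, y ((n : ℤ) + 1) =
      x ((n : ℤ) - 1) * y n / (x n * (c + d * (x ((n : ℤ) - 1) * y n)))) :
    ∀ n : ℕ, y (2 * (n : ℤ) - 1) =
      y (-1) ^ (1 - (n : ℤ)) * (x (-1) * y 0 / x 0) ^ n *
        ∏ s ∈ Finset.range n,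
          (a ^ (2 * s) + b * x 0 * y (-1) * ∑ l ∈ Finset.range (2 * s), a ^ l) /
          (c ^ (2 * s + 1) + d * x (-1) * y 0 * ∑ l ∈ Finset.range (2 * s + 1), c ^ l) := by
  have hUstep : ∀ n : ℕ, x (((n + 1 : ℕ) : ℤ)) * y (((n + 1 : ℕ) : ℤ) - 1)
      = (x n * y ((n : ℤ) - 1)) / (a + b * (x n * y ((n : ℤ) - 1))) := by
    intro n
    have hyn : y (n : ℤ) ≠ 0 := hy _ (by omega)
    have h1 := hda n
    push_cast
    rw [show (n : ℤ) + 1 - 1 = (n : ℤ) from by ring, hxe n]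
    field_simp
  have hVstep : ∀ n : ℕ, x (((n + 1 : ℕ) : ℤ) - 1) * y (((n + 1 : ℕ) : ℤ))
      = (x ((n : ℤ) - 1) * y n) / (c + d * (x ((n : ℤ) - 1) * y n)) := by
    intro n
    have hxn : x (n : ℤ) ≠ 0 := hx _ (by omega)
    have h1 := hdc n
    push_cast
    rw [show (n : ℤ) + 1 - 1 = (n : ℤ) from by ring, hye n]
    field_simp
  have hU := aux_closed (fun n : ℕ => x n * y ((n : ℤ) - 1)) a b hda hUstep
  have hV := aux_closed (fun n : ℕ => x ((n : ℤ) - 1) * y n) c d hdc hVstep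
  intro n
  induction n with
  | zero => norm_num
  | succ n ih =>
    obtain ⟨hDa, hUa⟩ := hU (2 * n)
    obtain ⟨hDc, hVc⟩ := hV (2 * n + 1)
    simp only [Nat.cast_mul, Nat.cast_ofNat, Nat.cast_add, Nat.cast_one, Nat.cast_zero]
      at hUa hVc hDa hDc
    rw [show (0 : ℤ) - 1 = -1 from by ring] at hUa hVc hDa hDc
    rw [show 2 * (n : ℤ) + 1 - 1 = 2 * (n : ℤ) from by ring] at hVc
    push_cast
    rw [show 2 * ((n : ℤ) + 1) - 1 = 2 * (n : ℤ) + 1 from by ring,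
      Finset.prod_range_succ, pow_succ,
      show (1 : ℤ) - ((n : ℤ) + 1) = (1 - (n : ℤ)) - 1 from by ring,
      zpow_sub_one₀ (hy (-1) (by omega))]
    have hx2n : x (2 * (n : ℤ)) ≠ 0 := hx _ (by omega)
    have hy2n1 : y (2 * (n : ℤ) - 1) ≠ 0 := hy _ (by omega)
    have hstep : y (2 * (n : ℤ) + 1)
        = y (2 * (n : ℤ) - 1) *
          ((x (2 * (n : ℤ)) * y (2 * (n : ℤ) + 1)) / (x (2 * (n : ℤ)) * y (2 * (n : ℤ) - 1))) := by
      field_simp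
    rw [hstep, hVc, hUa, ih]
    have hx0 : x 0 ≠ 0 := hx 0 (by omega)
    have hym1 : y (-1) ≠ 0 := hy (-1) (by omega)
    have hDa' : (a ^ (2 * n) + b * x 0 * y (-1) * ∑ l ∈ Finset.range (2 * n), a ^ l) ≠ 0 := by
      rw [mul_assoc b (x 0) (y (-1))]; exact hDa
    have hDc' : (c ^ (2 * n + 1) + d * x (-1) * y 0 * ∑ l ∈ Finset.range (2 * n + 1), c ^ l) ≠ 0 := by
      rw [mul_assoc d (x (-1)) (y 0)]; exact hDc
    set SA := ∑ l ∈ Finset.range (2 * n), a ^ l with hSA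
    set SC := ∑ l ∈ Finset.range (2 * n + 1), c ^ l with hSC
    set P := ∏ s ∈ Finset.range n,
          (a ^ (2 * s) + b * x 0 * y (-1) * ∑ l ∈ Finset.range (2 * s), a ^ l) /
          (c ^ (2 * s + 1) + d * x (-1) * y 0 * ∑ l ∈ Finset.range (2 * s + 1), c ^ l) with hP
    set Z := y (-1) ^ (1 - (n : ℤ)) with hZ
    field_simp
end

section
/- Let a, b, c, d be real constants and suppose (x_n)_{n≥-1}, (y_n)_{n≥-1} solve the constant-coefficient system with x_n ≠ 0 and y_n ≠ 0 for all n. Then for every n ≥ 0, y_{2n} = y_0^{n+1}·(x_{-1}/(x_0·y_{-1}))^n·∏_{s=0}^{n-1} [(a^{2s+1} + b·x_0·y_{-1}·∑_{l=0}^{2s} a^l) / (c^{2s+2} + d·x_{-1}·y_0·∑_{l=0}^{2s+1} c^l)]. -/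
set_option maxHeartbeats 1000000 in
theorem stmt_12 (x y : ℤ → ℝ) (a b c d : ℝ)
    (hx : ∀ n : ℤ, -1 ≤ n → x n ≠ 0) (hy : ∀ n : ℤ, -1 ≤ n → y n ≠ 0)
    (hda : ∀ n : ℕ, a + b * (x n * y ((n : ℤ) - 1)) ≠ 0)
    (hdc : ∀ n : ℕ, c + d * (x ((n : ℤ) - 1) * y n) ≠ 0)
    (hxe : ∀ n : ℕ, x ((n : ℤ) + 1) =
      x n * y ((n : ℤ) - 1) / (y n * (a + b * (x n * y ((n : ℤ) - 1)))))
    (hye : ∀ n : ℕ, y ((n : ℤ) + 1) =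
      x ((n : ℤ) - 1) * y n / (x n * (c + d * (x ((n : ℤ) - 1) * y n)))) :
    ∀ n : ℕ, y (2 * (n : ℤ)) =
      y 0 ^ (n + 1) * (x (-1) / (x 0 * y (-1))) ^ n *
        ∏ s ∈ Finset.range n,
          (a ^ (2 * s + 1) + b * x 0 * y (-1) * ∑ l ∈ Finset.range (2 * s + 1), a ^ l) /
          (c ^ (2 * s + 2) + d * x (-1) * y 0 * ∑ l ∈ Finset.range (2 * s + 2), c ^ l) := by
  have hxn : ∀ n : ℕ, x (n : ℤ) ≠ 0 := fun n => hx n (by omega)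
  have hyn : ∀ n : ℕ, y (n : ℤ) ≠ 0 := fun n => hy n (by omega)
  have hxn1 : ∀ n : ℕ, x ((n : ℤ) - 1) ≠ 0 := fun n => hx _ (by omega)
  have hyn1 : ∀ n : ℕ, y ((n : ℤ) - 1) ≠ 0 := fun n => hy _ (by omega)
  have hU0 : x 0 * y (-1) ≠ 0 := by
    have := mul_ne_zero (hxn 0) (hyn1 0); simpa using this
  have hV0 : x (-1) * y 0 ≠ 0 := by
    have := mul_ne_zero (hxn1 0) (hyn 0); simpa using this
  -- closed form for u_n = x n * y (n-1)
  have hA : ∀ n : ℕ, x (n : ℤ) * y ((n : ℤ) - 1) *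
      (a ^ n + b * (x 0 * y (-1)) * ∑ l ∈ Finset.range n, a ^ l) = x 0 * y (-1) := by
    intro n
    induction n with
    | zero => simp
    | succ n ih =>
      have hd := hda n
      have hyne := hyn n
      have hu : x ((n : ℤ) + 1) * y (n : ℤ) =
          (x n * y ((n : ℤ) - 1)) / (a + b * (x n * y ((n : ℤ) - 1))) := by
        rw [hxe n]
        field_simp
      have e1 : ((n + 1 : ℕ) : ℤ) = (n : ℤ) + 1 := by push_cast; ring
      have e2 : ((n : ℤ) + 1) - 1 = (n : ℤ) := by ring
      rw [e1, e2, geom_sum_succ, hu, div_mul_eq_mul_div, div_eq_iff hd]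
      linear_combination a * ih
  -- closed form for v_n = x (n-1) * y n
  have hC : ∀ n : ℕ, x ((n : ℤ) - 1) * y (n : ℤ) *
      (c ^ n + d * (x (-1) * y 0) * ∑ l ∈ Finset.range n, c ^ l) = x (-1) * y 0 := by
    intro n
    induction n with
    | zero => simp
    | succ n ih =>
      have hd := hdc n
      have hxne := hxn n
      have hv : x (n : ℤ) * y ((n : ℤ) + 1) =
          (x ((n : ℤ) - 1) * y n) / (c + d * (x ((n : ℤ) - 1) * y n)) := by
        rw [hye n]
        field_simp
      have e1 : ((n + 1 : ℕ) : ℤ) = (n : ℤ) + 1 := by push_cast; ring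
      have e2 : ((n : ℤ) + 1) - 1 = (n : ℤ) := by ring
      rw [e1, e2, geom_sum_succ, hv, div_mul_eq_mul_div, div_eq_iff hd]
      linear_combination c * ih
  have hAne : ∀ m : ℕ, (a ^ m + b * (x 0 * y (-1)) * ∑ l ∈ Finset.range m, a ^ l) ≠ 0 := by
    intro m h
    apply hU0
    rw [← hA m, h, mul_zero]
  have hCne : ∀ m : ℕ, (c ^ m + d * (x (-1) * y 0) * ∑ l ∈ Finset.range m, c ^ l) ≠ 0 := by
    intro m h
    apply hV0
    rw [← hC m, h, mul_zero]
  intro n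
  induction n with
  | zero => simp
  | succ n ih =>
    have hA1 := hA (2 * n + 1)
    have hC2 := hC (2 * n + 2)
    have e1 : ((2 * n + 1 : ℕ) : ℤ) = 2 * (n : ℤ) + 1 := by push_cast; ring
    have e2 : ((2 * n + 2 : ℕ) : ℤ) = 2 * (n : ℤ) + 2 := by push_cast; ring
    have e3 : (2 * (n : ℤ) + 1) - 1 = 2 * (n : ℤ) := by ring
    have e4 : (2 * (n : ℤ) + 2) - 1 = 2 * (n : ℤ) + 1 := by ring
    rw [e1, e3] at hA1
    rw [e2, e4] at hC2
    set DA := a ^ (2 * n + 1) + b * (x 0 * y (-1)) * ∑ l ∈ Finset.range (2 * n + 1), a ^ l with hDA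
    set DC := c ^ (2 * n + 2) + d * (x (-1) * y 0) * ∑ l ∈ Finset.range (2 * n + 2), c ^ l with hDC
    have hDAne : DA ≠ 0 := hAne (2 * n + 1)
    have hDCne : DC ≠ 0 := hCne (2 * n + 2)
    have h2 : y (2 * (n : ℤ) + 2) =
        y (2 * (n : ℤ)) * ((x (-1) * y 0) * DA) / ((x 0 * y (-1)) * DC) := by
      rw [eq_div_iff (mul_ne_zero hU0 hDCne)]
      linear_combination y (2 * (n : ℤ)) * DA * hC2 - y (2 * (n : ℤ) + 2) * DC * hA1
    have e5 : (2 * ((n : ℕ) + 1 : ℕ) : ℤ) = 2 * (n : ℤ) + 2 := by push_cast; ring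
    rw [e5, h2, ih, Finset.prod_range_succ]
    have hnum : a ^ (2 * n + 1) + b * x 0 * y (-1) * ∑ l ∈ Finset.range (2 * n + 1), a ^ l
        = DA := by rw [hDA]; ring
    have hden : c ^ (2 * n + 2) + d * x (-1) * y 0 * ∑ l ∈ Finset.range (2 * n + 2), c ^ l
        = DC := by rw [hDC]; ring
    rw [hnum, hden]
    have hx0 : x 0 ≠ 0 := hxn 0
    have hym1 : y (-1) ≠ 0 := by have := hyn1 0; simpa using this
    rw [div_pow, div_pow]
    field_simp
    ring
end

section
/- Let b, d be real constants and suppose (x_n)_{n≥-1}, (y_n)_{n≥-1} solve the constant-coefficient system with a = c = 1, with x_n ≠ 0 and y_n ≠ 0 for all n. Then for every n ≥ 0, x_{2n-1} = x_{-1}^{1-n}·(x_0·y_{-1}/y_0)^n·∏_{s=0}^{n-1} [(1 + 2s·d·x_{-1}·y_0) / (1 + (2s+1)·b·x_0·y_{-1})] and x_{2n} = x_0^{n+1}·(y_{-1}/(x_{-1}·y_0))^n·∏_{s=0}^{n-1} [(1 + (2s+1)·d·x_{-1}·y_0) / (1 + (2s+2)·b·x_0·y_{-1})], where x_{-1}^{1-n}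 denotes an integer power of the nonzero real x_{-1}. -/
/-!
The products `u n = x n * y (n - 1)` and `v n = x (n - 1) * y n` decouple:
`u (n + 1) = u n / (1 + b * u n)` and `v (n + 1) = v n / (1 + d * v n)`, so their reciprocals are
arithmetic progressions, `(u n)⁻¹ = (u 0)⁻¹ + n * b` and `(v n)⁻¹ = (v 0)⁻¹ + n * d`.
Since `x (n + 1) / x (n - 1) = u (n + 1) / v n`, the odd- and even-indexed terms of `x` are
telescoping products of these ratios.
-/

open Finset

section
variable {K : Type*} [Field K]

theorem inv_eq_inv_add_nat_mul_of_eq_div_one_add_mul {u : ℕ → K} {b : K}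
    (h : ∀ n, u (n + 1) = u n / (1 + b * u n)) (hu : ∀ n, u n ≠ 0) (n : ℕ) :
    (u n)⁻¹ = (u 0)⁻¹ + n * b := by
  induction n with
  | zero => simp
  | succ n ih =>
    rw [h, inv_div, add_div, one_div, mul_div_cancel_right₀ _ (hu n), ih]
    push_cast
    ring

theorem inv_add_div_inv_add {a c : K} (ha : a ≠ 0) (hc : c ≠ 0) (p q : K) :
    (a⁻¹ + p) / (c⁻¹ + q) = c / a * ((1 + p * a) / (1 + q * c)) := by
  rw [show a⁻¹ + p = (1 + p * a) / a by field_simp, show c⁻¹ + q = (1 + q * c) / c by field_simp,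
    div_div_div_eq, mul_comm, mul_div_mul_comm]

end

theorem eq_mul_prod_of_two_step {M : Type*} [CommMonoid M] {w r : ℕ → M}
    (h : ∀ m, w (m + 2) = w m * r m) (k n : ℕ) :
    w (2 * n + k) = w k * ∏ s ∈ range n, r (2 * s + k) := by
  induction n with
  | zero => simp
  | succ n ih =>
    rw [prod_range_succ, ← mul_assoc, ← ih, ← h]
    ring_nf

section
variable {x y : ℤ → ℝ} {b d : ℝ}

theorem inv_x_mul_y_pred (hx : ∀ n : ℤ, -1 ≤ n → x n ≠ 0) (hy : ∀ n : ℤ, -1 ≤ n → y n ≠ 0)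
    (hxe : ∀ n : ℕ, x ((n : ℤ) + 1) =
      x n * y ((n : ℤ) - 1) / (y n * (1 + b * (x n * y ((n : ℤ) - 1))))) (n : ℕ) :
    (x n * y (n - 1))⁻¹ = (x 0 * y (-1))⁻¹ + n * b := by
  have := inv_eq_inv_add_nat_mul_of_eq_div_one_add_mul (u := fun n : ℕ => x n * y (n - 1)) (b := b)
    (fun n => ?_) (fun n => mul_ne_zero (hx _ (by omega)) (hy _ (by omega))) n
  · simpa using this
  · push_cast
    rw [add_sub_cancel_right, hxe, div_mul_eq_mul_div, mul_comm (y n),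
      mul_div_mul_right _ _ (hy n (by omega))]

theorem inv_x_pred_mul_y (hx : ∀ n : ℤ, -1 ≤ n → x n ≠ 0) (hy : ∀ n : ℤ, -1 ≤ n → y n ≠ 0)
    (hye : ∀ n : ℕ, y ((n : ℤ) + 1) =
      x ((n : ℤ) - 1) * y n / (x n * (1 + d * (x ((n : ℤ) - 1) * y n)))) (n : ℕ) :
    (x (n - 1) * y n)⁻¹ = (x (-1) * y 0)⁻¹ + n * d := by
  have := inv_eq_inv_add_nat_mul_of_eq_div_one_add_mul (u := fun n : ℕ => x (n - 1) * y n) (b := d)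
    (fun n => ?_) (fun n => mul_ne_zero (hx _ (by omega)) (hy _ (by omega))) n
  · simpa using this
  · push_cast
    rw [add_sub_cancel_right, hye, mul_div_assoc', mul_div_mul_left _ _ (hx n (by omega))]

theorem x_succ_eq_x_pred_mul (hx : ∀ n : ℤ, -1 ≤ n → x n ≠ 0) (hy : ∀ n : ℤ, -1 ≤ n → y n ≠ 0)
    (hxe : ∀ n : ℕ, x ((n : ℤ) + 1) =
      x n * y ((n : ℤ) - 1) / (y n * (1 + b * (x n * y ((n : ℤ) - 1)))))
    (hye : ∀ n : ℕ, y ((n : ℤ) + 1) =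
      x ((n : ℤ) - 1) * y n / (x n * (1 + d * (x ((n : ℤ) - 1) * y n)))) (m : ℕ) :
    x (m + 1) = x (m - 1) * (((x (-1) * y 0)⁻¹ + m * d) / ((x 0 * y (-1))⁻¹ + (m + 1) * b)) := by
  have hu := inv_x_mul_y_pred hx hy hxe (m + 1)
  push_cast at hu
  rw [← inv_x_pred_mul_y hx hy hye, ← hu, add_sub_cancel_right, inv_div_inv]
  field_simp [hx (m - 1) (by omega), hy m (by omega)]
end

theorem stmt_13_general (x y : ℤ → ℝ) (b d : ℝ)
    (hx : ∀ n : ℤ, -1 ≤ n → x n ≠ 0) (hy : ∀ n : ℤ, -1 ≤ n → y n ≠ 0)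
    (hxe : ∀ n : ℕ, x ((n : ℤ) + 1) =
      x n * y ((n : ℤ) - 1) / (y n * (1 + b * (x n * y ((n : ℤ) - 1)))))
    (hye : ∀ n : ℕ, y ((n : ℤ) + 1) =
      x ((n : ℤ) - 1) * y n / (x n * (1 + d * (x ((n : ℤ) - 1) * y n)))) :
    ∀ n : ℕ,
      x (2 * (n : ℤ) - 1) =
        x (-1) ^ (1 - (n : ℤ)) * (x 0 * y (-1) / y 0) ^ n *
          ∏ s ∈ Finset.range n,
            (1 + 2 * (s : ℝ) * d * x (-1) * y 0) /
            (1 + (2 * (s : ℝ) + 1) * b * x 0 * y (-1)) ∧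
      x (2 * (n : ℤ)) =
        x 0 ^ (n + 1) * (y (-1) / (x (-1) * y 0)) ^ n *
          ∏ s ∈ Finset.range n,
            (1 + (2 * (s : ℝ) + 1) * d * x (-1) * y 0) /
            (1 + (2 * (s : ℝ) + 2) * b * x 0 * y (-1)) := by
  intro n
  have hA : x (-1) ≠ 0 := hx (-1) le_rfl
  have hB : y 0 ≠ 0 := hy 0 (by norm_num)
  have hC : x 0 ≠ 0 := hx 0 (by norm_num)
  have hD : y (-1) ≠ 0 := hy (-1) le_rfl
  have hstep : ∀ m : ℕ, x (((m + 2 : ℕ) : ℤ) - 1) = x ((m : ℤ) - 1) *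
      (x 0 * y (-1) / (x (-1) * y 0) *
        ((1 + m * d * x (-1) * y 0) / (1 + (m + 1) * b * x 0 * y (-1)))) := by
    intro m
    rw [show ((m + 2 : ℕ) : ℤ) - 1 = m + 1 by omega, x_succ_eq_x_pred_mul hx hy hxe hye,
      inv_add_div_inv_add (mul_ne_zero hA hB) (mul_ne_zero hC hD)]
    ring_nf
  have hodd := eq_mul_prod_of_two_step (w := fun m : ℕ => x ((m : ℤ) - 1)) hstep 0 n
  have heven := eq_mul_prod_of_two_step (w := fun m : ℕ => x ((m : ℤ) - 1)) hstep 1 n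
  simp only [prod_mul_distrib, prod_const, card_range] at hodd heven
  push_cast at hodd heven
  simp only [add_zero, add_sub_cancel_right, add_assoc, one_add_one_eq_two] at hodd heven
  constructor
  · rw [hodd, ← mul_assoc, zpow_sub₀ hA, zpow_one, zpow_natCast]
    congr 1
    field_simp
    rw [← mul_pow]
    field_simp
  · rw [heven, ← mul_assoc]
    congr 1
    field_simp
    ring

theorem stmt_13 (x y : ℤ → ℝ) (b d : ℝ)
    (hx : ∀ n : ℤ, -1 ≤ n → x n ≠ 0) (hy : ∀ n : ℤ, -1 ≤ n → y n ≠ 0)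
    (hda : ∀ n : ℕ, 1 + b * (x n * y ((n : ℤ) - 1)) ≠ 0)
    (hdc : ∀ n : ℕ, 1 + d * (x ((n : ℤ) - 1) * y n) ≠ 0)
    (hxe : ∀ n : ℕ, x ((n : ℤ) + 1) =
      x n * y ((n : ℤ) - 1) / (y n * (1 + b * (x n * y ((n : ℤ) - 1)))))
    (hye : ∀ n : ℕ, y ((n : ℤ) + 1) =
      x ((n : ℤ) - 1) * y n / (x n * (1 + d * (x ((n : ℤ) - 1) * y n)))) :
    ∀ n : ℕ,
      x (2 * (n : ℤ) - 1) =
        x (-1) ^ (1 - (n : ℤ)) * (x 0 * y (-1) / y 0) ^ n *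
          ∏ s ∈ Finset.range n,
            (1 + 2 * (s : ℝ) * d * x (-1) * y 0) /
            (1 + (2 * (s : ℝ) + 1) * b * x 0 * y (-1)) ∧
      x (2 * (n : ℤ)) =
        x 0 ^ (n + 1) * (y (-1) / (x (-1) * y 0)) ^ n *
          ∏ s ∈ Finset.range n,
            (1 + (2 * (s : ℝ) + 1) * d * x (-1) * y 0) /
            (1 + (2 * (s : ℝ) + 2) * b * x 0 * y (-1)) :=
  stmt_13_general x y b d hx hy hxe hye
end

section
/- Let b, d be real constants and suppose (x_n)_{n≥-1}, (y_n)_{n≥-1} solve the constant-coefficient system with a = c = 1, with x_n ≠ 0 and y_n ≠ 0 for all n. Then for every n ≥ 0, y_{2n-1} = y_{-1}^{1-n}·(x_{-1}·y_0/x_0)^n·∏_{s=0}^{n-1} [(1 + 2s·b·x_0·y_{-1}) / (1 + (2s+1)·d·x_{-1}·y_0)] and y_{2n} = y_0^{n+1}·(x_{-1}/(x_0·y_{-1}))^n·∏_{s=0}^{n-1} [(1 + (2s+1)·b·x_0·y_{-1}) / (1 + (2s+2)·d·x_{-1}·y_0)], where y_{-1}^{1-n} denotes an integer power of the nonzero real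 y_{-1}. -/
/-! The products u n = x n * y (n - 1) and v n = x (n - 1) * y n each obey w (n + 1) = w n / (1 + c * w n),
so their reciprocals are arithmetic progressions and u n = u 0 / (1 + n b u 0), v n = v 0 / (1 + n d v 0).
Dividing, y (n + 1) / y (n - 1) = v (n + 1) / u n is explicit, and telescoping this ratio along the
even and along the odd indices gives the two products. -/

open Finset

theorem closed_form_of_succ_eq_div_one_add_mul {K : Type*} [Field K] {w : ℕ → K} {c : K}
    (hne : ∀ n, 1 + c * w n ≠ 0) (hrec : ∀ n, w (n + 1) = w n / (1 + c * w n)) (n : ℕ) :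
    1 + n * c * w 0 ≠ 0 ∧ w n = w 0 / (1 + n * c * w 0) := by
  induction n with
  | zero => simp
  | succ n ih =>
    obtain ⟨hB, hw⟩ := ih
    have hstep : 1 + c * w n = (1 + (n + 1) * c * w 0) / (1 + n * c * w 0) := by
      rw [hw, mul_div_assoc', one_add_div hB]; ring
    have hD : 1 + (n + 1) * c * w 0 ≠ 0 := fun h ↦ hne n (by rw [hstep, h, zero_div])
    push_cast
    exact ⟨hD, by rw [hrec, hstep, hw, div_div_div_cancel_right₀ hB]⟩

theorem eq_mul_prod_of_add_two {M : Type*} [CommMonoid M] {f r : ℕ → M}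
    (h : ∀ k, f (k + 2) = f k * r k) (i n : ℕ) :
    f (2 * n + i) = f i * ∏ s ∈ range n, r (2 * s + i) := by
  induction n with
  | zero => simp
  | succ n ih => rw [prod_range_succ, ← mul_assoc, ← ih, ← h]; ring_nf

section System

variable {x y : ℤ → ℝ} {b d : ℝ}

theorem x_succ_mul_y_eq (hy : ∀ n : ℤ, -1 ≤ n → y n ≠ 0)
    (hxe : ∀ n : ℕ, x ((n : ℤ) + 1) =
      x n * y ((n : ℤ) - 1) / (y n * (1 + b * (x n * y ((n : ℤ) - 1))))) (n : ℕ) :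
    x ((n + 1 : ℕ) : ℤ) * y (((n + 1 : ℕ) : ℤ) - 1) =
      x n * y ((n : ℤ) - 1) / (1 + b * (x n * y ((n : ℤ) - 1))) := by
  have := hy n (by omega)
  push_cast
  rw [add_sub_cancel_right, hxe n]
  field_simp

theorem x_mul_y_succ_eq (hx : ∀ n : ℤ, -1 ≤ n → x n ≠ 0)
    (hye : ∀ n : ℕ, y ((n : ℤ) + 1) =
      x ((n : ℤ) - 1) * y n / (x n * (1 + d * (x ((n : ℤ) - 1) * y n)))) (n : ℕ) :
    x (((n + 1 : ℕ) : ℤ) - 1) * y ((n + 1 : ℕ) : ℤ) =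
      x ((n : ℤ) - 1) * y n / (1 + d * (x ((n : ℤ) - 1) * y n)) := by
  have := hx n (by omega)
  push_cast
  rw [add_sub_cancel_right, hye n]
  field_simp

theorem y_add_one_eq (hx : ∀ n : ℤ, -1 ≤ n → x n ≠ 0) (hy : ∀ n : ℤ, -1 ≤ n → y n ≠ 0)
    (hda : ∀ n : ℕ, 1 + b * (x n * y ((n : ℤ) - 1)) ≠ 0)
    (hdc : ∀ n : ℕ, 1 + d * (x ((n : ℤ) - 1) * y n) ≠ 0)
    (hxe : ∀ n : ℕ, x ((n : ℤ) + 1) =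
      x n * y ((n : ℤ) - 1) / (y n * (1 + b * (x n * y ((n : ℤ) - 1)))))
    (hye : ∀ n : ℕ, y ((n : ℤ) + 1) =
      x ((n : ℤ) - 1) * y n / (x n * (1 + d * (x ((n : ℤ) - 1) * y n)))) (n : ℕ) :
    y (n + 1) = y (n - 1) * (x (-1) * y 0 / (x 0 * y (-1))) *
      ((1 + n * b * x 0 * y (-1)) / (1 + (n + 1) * d * x (-1) * y 0)) := by
  obtain ⟨hB, hu⟩ := closed_form_of_succ_eq_div_one_add_mul (w := fun n : ℕ ↦ x n * y (n - 1))
    hda (x_succ_mul_y_eq hy hxe) n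
  obtain ⟨hD, hv⟩ := closed_form_of_succ_eq_div_one_add_mul (w := fun n : ℕ ↦ x (n - 1) * y n)
    hdc (x_mul_y_succ_eq hx hye) (n + 1)
  push_cast at hu hv hB hD
  simp only [add_sub_cancel_right] at hu hv hB hD
  have := hx n (by omega)
  have := hy (n - 1) (by omega)
  have := hx 0 (by omega)
  have := hy (-1) le_rfl
  calc y (n + 1) = x n * y (n + 1) / (x n * y (n - 1)) * y (n - 1) := by field_simp
    _ = _ := by rw [hu, hv]; field_simp

end System

theorem stmt_14 (x y : ℤ → ℝ) (b d : ℝ)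
    (hx : ∀ n : ℤ, -1 ≤ n → x n ≠ 0) (hy : ∀ n : ℤ, -1 ≤ n → y n ≠ 0)
    (hda : ∀ n : ℕ, 1 + b * (x n * y ((n : ℤ) - 1)) ≠ 0)
    (hdc : ∀ n : ℕ, 1 + d * (x ((n : ℤ) - 1) * y n) ≠ 0)
    (hxe : ∀ n : ℕ, x ((n : ℤ) + 1) =
      x n * y ((n : ℤ) - 1) / (y n * (1 + b * (x n * y ((n : ℤ) - 1)))))
    (hye : ∀ n : ℕ, y ((n : ℤ) + 1) =
      x ((n : ℤ) - 1) * y n / (x n * (1 + d * (x ((n : ℤ) - 1) * y n)))) :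
    ∀ n : ℕ,
      y (2 * (n : ℤ) - 1) =
        y (-1) ^ (1 - (n : ℤ)) * (x (-1) * y 0 / x 0) ^ n *
          ∏ s ∈ Finset.range n,
            (1 + 2 * (s : ℝ) * b * x 0 * y (-1)) /
            (1 + (2 * (s : ℝ) + 1) * d * x (-1) * y 0) ∧
      y (2 * (n : ℤ)) =
        y 0 ^ (n + 1) * (x (-1) / (x 0 * y (-1))) ^ n *
          ∏ s ∈ Finset.range n,
            (1 + (2 * (s : ℝ) + 1) * b * x 0 * y (-1)) /
            (1 + (2 * (s : ℝ) + 2) * d * x (-1) * y 0) := by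
  intro n
  have hrec (k : ℕ) : y (((k + 2 : ℕ) : ℤ) - 1) = y ((k : ℤ) - 1) *
      ((x (-1) * y 0 / (x 0 * y (-1))) *
        ((1 + k * b * x 0 * y (-1)) / (1 + (k + 1) * d * x (-1) * y 0))) := by
    rw [← mul_assoc, ← y_add_one_eq hx hy hda hdc hxe hye]
    congr 1
    push_cast
    ring
  have hodd := eq_mul_prod_of_add_two (f := fun k : ℕ ↦ y ((k : ℤ) - 1)) hrec 0 n
  have heven := eq_mul_prod_of_add_two (f := fun k : ℕ ↦ y ((k : ℤ) - 1)) hrec 1 n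
  simp only [prod_mul_distrib, prod_const, card_range] at hodd heven
  push_cast at hodd heven
  simp only [add_zero, add_sub_cancel_right, add_assoc, one_add_one_eq_two] at hodd heven
  rw [hodd, heven, ← mul_assoc, ← mul_assoc, zpow_sub₀ (hy (-1) le_rfl), zpow_one, zpow_natCast]
  constructor
  · rw [← div_div, div_pow]; ring
  · ring
end

section
/- Let a, b, c, d be real constants with a ≠ 1 and c ≠ 1, and suppose (x_n)_{n≥-1}, (y_n)_{n≥-1} solve the constant-coefficient system with x_n ≠ 0 and y_n ≠ 0 for all n. Then for every n ≥ 0, y_{2n-1} = y_{-1}^{1-n}·(x_{-1}·y_0/x_0)^n·∏_{s=0}^{n-1} [(a^{2s} + b·x_0·y_{-1}·(1 - a^{2s})/(1 - a)) / (c^{2s+1} + d·x_{-1}·y_0·(1 - c^{2s+1})/(1 - c))] and y_{2n} = y_0^{n+1}·(x_{-1}/(x_0·y_{-1}))^n·∏_{s=0}^{n-1} [(a^{2s+1} + b·x_0·y_{-1}·(1 - a^{2s+1})/(1 - a)) / (c^{2s+2} + d·x_{-1}·y_0·(1 - c^{2s+2})/(1 - c))], where y_{-1}^{1-n} denotes an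 integer power of the nonzero real y_{-1}. -/
/-!
The products `u n = x n * y (n - 1)` and `v n = x (n - 1) * y n` decouple: the system says
`u (n + 1) = u n / (a + b * u n)` and `v (n + 1) = v n / (c + d * v n)`. These are Riccati
recurrences whose reciprocals are affine, so `u n * (a ^ n + b * u 0 * ∑ i < n, a ^ i) = u 0`,
and likewise for `v`. Since `y (n + 1) * u n = y (n - 1) * v (n + 1)`, the ratio
`y (n + 1) / y (n - 1)` is explicit, and each parity class of `y` is a telescoping product.
-/

open Finset

section Riccati

variable {R : Type*} [CommRing R]

def riccatiFactor (a b u₀ : R) (n : ℕ) : R :=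
  a ^ n + b * u₀ * ∑ i ∈ range n, a ^ i

theorem mul_riccatiFactor_eq {u : ℕ → R} {a b : R}
    (h : ∀ n, u (n + 1) * (a + b * u n) = u n) (n : ℕ) :
    u n * riccatiFactor a b (u 0) n = u 0 := by
  induction n with
  | zero => simp [riccatiFactor]
  | succ n ih =>
    rw [riccatiFactor] at ih ⊢
    rw [geom_sum_succ, pow_succ]
    linear_combination (1 - b * u (n + 1)) * ih + (a ^ n + b * u 0 * ∑ i ∈ range n, a ^ i) * h n

theorem riccatiFactor_eq_div {K : Type*} [Field K] {a : K} (ha : a ≠ 1) (b u₀ : K) (n : ℕ) :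
    riccatiFactor a b u₀ n = a ^ n + b * u₀ * ((1 - a ^ n) / (1 - a)) := by
  rw [riccatiFactor, range_eq_Ico, geom_sum_Ico' ha n.zero_le, pow_zero]

end Riccati

theorem eq_mul_prod_of_succ_eq_pred_mul {M : Type*} [CommMonoid M] {y : ℤ → M} {r : ℕ → M}
    (h : ∀ m : ℕ, y (m + 1) = y (m - 1) * r m) (j n : ℕ) :
    y (2 * n + j - 1) = y (j - 1) * ∏ s ∈ range n, r (2 * s + j) := by
  induction n with
  | zero => simp
  | succ n ih =>
    have step := h (2 * n + j)
    push_cast at step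
    rw [prod_range_succ, ← mul_assoc, ← ih, ← step]
    congr 1
    push_cast
    ring

theorem y_succ_eq_y_pred_mul {K : Type*} [Field K] {x y : ℤ → K} {a b c d : K}
    (hU : ∀ m : ℕ, x (m + 1) * (y m * (a + b * (x m * y (m - 1)))) = x m * y (m - 1))
    (hV : ∀ m : ℕ, y (m + 1) * (x m * (c + d * (x (m - 1) * y m))) = x (m - 1) * y m)
    (hu₀ : x 0 * y (-1) ≠ 0) (hv₀ : x (-1) * y 0 ≠ 0) (m : ℕ) :
    y (m + 1) = y (m - 1) * (x (-1) * y 0 / (x 0 * y (-1)) *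
      (riccatiFactor a b (x 0 * y (-1)) m / riccatiFactor c d (x (-1) * y 0) (m + 1))) := by
  have hu := mul_riccatiFactor_eq (u := fun m : ℕ ↦ x m * y (m - 1)) (a := a) (b := b)
    (fun n ↦ by push_cast; rw [add_sub_cancel_right]; linear_combination hU n) m
  have hv := mul_riccatiFactor_eq (u := fun m : ℕ ↦ x (m - 1) * y m) (a := c) (b := d)
    (fun n ↦ by push_cast; rw [add_sub_cancel_right]; linear_combination hV n) (m + 1)
  push_cast at hu hv
  rw [add_sub_cancel_right] at hv
  have hC : riccatiFactor c d (x (-1) * y 0) (m + 1) ≠ 0 := right_ne_zero_of_mul (hv ▸ hv₀)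
  rw [div_mul_div_comm, mul_div_assoc', eq_div_iff (mul_ne_zero hu₀ hC)]
  linear_combination y (m - 1) * riccatiFactor a b (x 0 * y (-1)) m * hv
    - y (m + 1) * riccatiFactor c d (x (-1) * y 0) (m + 1) * hu

theorem stmt_16 (x y : ℤ → ℝ) (a b c d : ℝ) (ha : a ≠ 1) (hc : c ≠ 1)
    (hx : ∀ n : ℤ, -1 ≤ n → x n ≠ 0) (hy : ∀ n : ℤ, -1 ≤ n → y n ≠ 0)
    (hda : ∀ n : ℕ, a + b * (x n * y ((n : ℤ) - 1)) ≠ 0)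
    (hdc : ∀ n : ℕ, c + d * (x ((n : ℤ) - 1) * y n) ≠ 0)
    (hxe : ∀ n : ℕ, x ((n : ℤ) + 1) =
      x n * y ((n : ℤ) - 1) / (y n * (a + b * (x n * y ((n : ℤ) - 1)))))
    (hye : ∀ n : ℕ, y ((n : ℤ) + 1) =
      x ((n : ℤ) - 1) * y n / (x n * (c + d * (x ((n : ℤ) - 1) * y n)))) :
    ∀ n : ℕ,
      y (2 * (n : ℤ) - 1) =
        y (-1) ^ (1 - (n : ℤ)) * (x (-1) * y 0 / x 0) ^ n *
          ∏ s ∈ Finset.range n,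
            (a ^ (2 * s) + b * x 0 * y (-1) * ((1 - a ^ (2 * s)) / (1 - a))) /
            (c ^ (2 * s + 1) + d * x (-1) * y 0 * ((1 - c ^ (2 * s + 1)) / (1 - c))) ∧
      y (2 * (n : ℤ)) =
        y 0 ^ (n + 1) * (x (-1) / (x 0 * y (-1))) ^ n *
          ∏ s ∈ Finset.range n,
            (a ^ (2 * s + 1) + b * x 0 * y (-1) * ((1 - a ^ (2 * s + 1)) / (1 - a))) /
            (c ^ (2 * s + 2) + d * x (-1) * y 0 * ((1 - c ^ (2 * s + 2)) / (1 - c))) := by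
  have hy_neg_one : y (-1) ≠ 0 := hy (-1) le_rfl
  have hu₀ : x 0 * y (-1) ≠ 0 := mul_ne_zero (hx 0 (by norm_num)) hy_neg_one
  have hv₀ : x (-1) * y 0 ≠ 0 := mul_ne_zero (hx (-1) le_rfl) (hy 0 (by norm_num))
  have hU : ∀ m : ℕ, x (m + 1) * (y m * (a + b * (x m * y (m - 1)))) = x m * y (m - 1) :=
    fun m ↦ (eq_div_iff (mul_ne_zero (hy m (by omega)) (hda m))).mp (hxe m)
  have hV : ∀ m : ℕ, y (m + 1) * (x m * (c + d * (x (m - 1) * y m))) = x (m - 1) * y m :=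
    fun m ↦ (eq_div_iff (mul_ne_zero (hx m (by omega)) (hdc m))).mp (hye m)
  have hprod := eq_mul_prod_of_succ_eq_pred_mul (y_succ_eq_y_pred_mul hU hV hu₀ hv₀)
  have hA (k : ℕ) : a ^ k + b * x 0 * y (-1) * ((1 - a ^ k) / (1 - a)) =
      riccatiFactor a b (x 0 * y (-1)) k := by rw [riccatiFactor_eq_div ha]; ring
  have hC (k : ℕ) : c ^ k + d * x (-1) * y 0 * ((1 - c ^ k) / (1 - c)) =
      riccatiFactor c d (x (-1) * y 0) k := by rw [riccatiFactor_eq_div hc]; ring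
  intro n
  simp only [hA, hC]
  constructor
  · have hodd := hprod 0 n
    simp only [Nat.cast_zero, add_zero, zero_sub] at hodd
    rw [hodd, prod_mul_distrib, prod_const, card_range, zpow_one_sub_natCast₀ hy_neg_one,
      div_pow, div_pow, mul_pow (x 0)]
    field_simp
  · have heven := hprod 1 n
    simp only [Nat.cast_one, sub_self, add_sub_cancel_right] at heven
    rw [heven, prod_mul_distrib, prod_const, card_range]
    ring
end

section
/- Let b, d be real constants with b·x_0·y_{-1} ≠ 1 and d·x_{-1}·y_0 ≠ 1, and suppose (x_n)_{n≥-1}, (y_n)_{n≥-1} solve the constant-coefficient system with a = c = -1, with x_n ≠ 0 and y_n ≠ 0 for all n. Then for every n ≥ 0: x_{2n-1} = x_{-1}^{1-n}·(x_0·y_{-1}/y_0)^n·(-1 + b·x_0·y_{-1})^{-n}, x_{2n} = x_0^{n+1}·(y_{-1}/(x_{-1}·y_0))^n·(-1 + d·x_{-1}·y_0)^n, y_{2n-1} = y_{-1}^{1-n}·(x_{-1}·y_0/x_0)^n·(-1 + d·x_{-1}·y_0)^{-n}, and y_{2n} = y_0^{n+1}·(x_{-1}/(x_0·y_{-1}))^n·(-1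 + b·x_0·y_{-1})^n, where negative exponents denote integer powers of nonzero reals. -/
/-!
The products `P n = x n * y (n - 1)` and `Q n = x (n - 1) * y n` satisfy the decoupled
recurrences `P (n + 1) = P n / (-1 + b * P n)` and `Q (n + 1) = Q n / (-1 + d * Q n)`, and
`t ↦ t / (-1 + b * t)` is an involution, so `P` and `Q` are 2-periodic. Since `x (n + 1) * y n`
and `x (n - 1) * y n` are consecutive values of `P` and `Q`, the ratio `x (n + 1) / x (n - 1)`
depends only on the parity of `n`; hence each parity class of `x` (and likewise of `y`) is a
geometric progression.
-/

section

variable {K : Type*} [Field K]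

theorem div_neg_one_add_mul_apply_twice {b t : K} (ht : -1 + b * t ≠ 0) :
    t / (-1 + b * t) / (-1 + b * (t / (-1 + b * t))) = t := by
  have hden : -1 + b * (t / (-1 + b * t)) = (-1 + b * t)⁻¹ := by
    field_simp
    ring
  rw [hden, div_inv_eq_mul, div_mul_cancel₀ t ht]

theorem period_two_of_succ_eq_div {u : ℕ → K} {b : K} (h₀ : -1 + b * u 0 ≠ 0)
    (hu : ∀ n, u (n + 1) = u n / (-1 + b * u n)) (n : ℕ) :
    u (2 * n) = u 0 ∧ u (2 * n + 1) = u 0 / (-1 + b * u 0) := by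
  have heven : u (2 * n) = u 0 := by
    induction n with
    | zero => rfl
    | succ n ih =>
      rw [show 2 * (n + 1) = 2 * n + 1 + 1 by ring, hu, hu, ih]
      exact div_neg_one_add_mul_apply_twice h₀
  exact ⟨heven, by rw [hu, heven]⟩

theorem eq_mul_pow_of_mul_eq {u w : ℕ → K} {c c' : K} (hc : c ≠ 0) (hw : ∀ n, w n ≠ 0)
    (h : ∀ n, u n * w n = c) (h' : ∀ n, u (n + 1) * w n = c') (n : ℕ) :
    u n = u 0 * (c' / c) ^ n := by
  induction n with
  | zero => simp
  | succ n ih =>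
    have hstep : u (n + 1) = u n * (c' / c) := by
      have hun : u n ≠ 0 := left_ne_zero_of_mul (h n ▸ hc)
      rw [← h n, ← h' n, mul_div_mul_right _ _ (hw n), mul_div_cancel₀ _ hun]
    rw [hstep, ih, pow_succ, mul_assoc]

theorem mul_eq_div_of_eq_div_mul {a c e f : K} (he : e ≠ 0) (h : a = c / (e * f)) :
    a * e = c / f :=
  (eq_div_iff he).1 (h.trans (div_mul_eq_div_div_swap c e f))

theorem mul_pred_period_two {x y : ℤ → K} {b : K} (hy : ∀ n : ℕ, y n ≠ 0)
    (h₀ : -1 + b * (x 0 * y (-1)) ≠ 0)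
    (hxe : ∀ n : ℕ, x (n + 1) = x n * y (n - 1) / (y n * (-1 + b * (x n * y (n - 1)))))
    (n : ℕ) :
    x (2 * n) * y (2 * n - 1) = x 0 * y (-1) ∧
      x (2 * n + 1) * y (2 * n) = x 0 * y (-1) / (-1 + b * (x 0 * y (-1))) := by
  have hu := period_two_of_succ_eq_div (u := fun n : ℕ => x n * y (n - 1)) (by simpa using h₀)
    (fun n => by
      push_cast
      rw [add_sub_cancel_right]
      exact mul_eq_div_of_eq_div_mul (hy n) (hxe n)) n
  simpa using hu

theorem eq_mul_pow_of_alternating_products {x y : ℤ → K} {p p' q q' : K} (hq : q ≠ 0)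
    (hq' : q' ≠ 0) (hy : ∀ n : ℕ, y n ≠ 0)
    (hP : ∀ n : ℕ, x (2 * n) * y (2 * n - 1) = p ∧ x (2 * n + 1) * y (2 * n) = p')
    (hQ : ∀ n : ℕ, x (2 * n - 1) * y (2 * n) = q ∧ x (2 * n) * y (2 * n + 1) = q') (n : ℕ) :
    x (2 * n - 1) = x (-1) * (p' / q) ^ n ∧ x (2 * n) = x 0 * (p / q') ^ n := by
  constructor
  · refine eq_mul_pow_of_mul_eq (u := fun n : ℕ => x (2 * n - 1)) (w := fun n : ℕ => y (2 * n))
      hq (fun n => by exact_mod_cast hy (2 * n)) (fun n => (hQ n).1) (fun n => ?_) n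
    convert (hP n).2 using 3
    push_cast
    ring
  · refine eq_mul_pow_of_mul_eq (u := fun n : ℕ => x (2 * n)) (w := fun n : ℕ => y (2 * n + 1))
      hq' (fun n => by exact_mod_cast hy (2 * n + 1)) (fun n => (hQ n).2) (fun n => ?_) n
    convert (hP (n + 1)).1 using 3
    push_cast
    ring

end

theorem stmt_17_general (x y : ℤ → ℝ) (b d : ℝ)
    (hx : ∀ n : ℤ, -1 ≤ n → x n ≠ 0) (hy : ∀ n : ℤ, -1 ≤ n → y n ≠ 0)
    (hda : ∀ n : ℕ, (-1) + b * (x n * y ((n : ℤ) - 1)) ≠ 0)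
    (hdc : ∀ n : ℕ, (-1) + d * (x ((n : ℤ) - 1) * y n) ≠ 0)
    (hxe : ∀ n : ℕ, x ((n : ℤ) + 1) =
      x n * y ((n : ℤ) - 1) / (y n * ((-1) + b * (x n * y ((n : ℤ) - 1)))))
    (hye : ∀ n : ℕ, y ((n : ℤ) + 1) =
      x ((n : ℤ) - 1) * y n / (x n * ((-1) + d * (x ((n : ℤ) - 1) * y n)))) :
    ∀ n : ℕ,
      x (2 * (n : ℤ) - 1) =
        x (-1) ^ (1 - (n : ℤ)) * (x 0 * y (-1) / y 0) ^ n *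
          (-1 + b * x 0 * y (-1)) ^ (-(n : ℤ)) ∧
      x (2 * (n : ℤ)) =
        x 0 ^ (n + 1) * (y (-1) / (x (-1) * y 0)) ^ n * (-1 + d * x (-1) * y 0) ^ n ∧
      y (2 * (n : ℤ) - 1) =
        y (-1) ^ (1 - (n : ℤ)) * (x (-1) * y 0 / x 0) ^ n *
          (-1 + d * x (-1) * y 0) ^ (-(n : ℤ)) ∧
      y (2 * (n : ℤ)) =
        y 0 ^ (n + 1) * (x (-1) / (x 0 * y (-1))) ^ n * (-1 + b * x 0 * y (-1)) ^ n := by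
  have hxn (n : ℕ) : x n ≠ 0 := hx n (by omega)
  have hyn (n : ℕ) : y n ≠ 0 := hy n (by omega)
  have hxm := hx (-1) le_rfl
  have hym := hy (-1) le_rfl
  have hA : -1 + b * (x 0 * y (-1)) ≠ 0 := by simpa using hda 0
  have hC : -1 + d * (x (-1) * y 0) ≠ 0 := by simpa using hdc 0
  have hP := mul_pred_period_two hyn hA hxe
  have hQ := mul_pred_period_two (x := y) (y := x) (b := d) hxn (by rwa [mul_comm (y 0)])
    fun n => by rw [hye n, mul_comm (x _) (y _)]
  simp only [mul_comm (y _) (x _)] at hQ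
  have hp : x 0 * y (-1) ≠ 0 := mul_ne_zero (hxn 0) hym
  have hq : x (-1) * y 0 ≠ 0 := mul_ne_zero hxm (hyn 0)
  intro n
  obtain ⟨hx_odd, hx_even⟩ :=
    eq_mul_pow_of_alternating_products hq (div_ne_zero hq hC) hyn hP hQ n
  obtain ⟨hy_odd, hy_even⟩ := eq_mul_pow_of_alternating_products (x := y) (y := x)
    hp (div_ne_zero hp hA) hxn
    (fun n => ⟨(mul_comm _ _).trans (hQ n).1, (mul_comm _ _).trans (hQ n).2⟩)
    (fun n => ⟨(mul_comm _ _).trans (hP n).1, (mul_comm _ _).trans (hP n).2⟩) n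
  rw [hx_odd, hx_even, hy_odd, hy_even, zpow_sub₀ hxm, zpow_sub₀ hym, mul_assoc b, mul_assoc d]
  simp only [zpow_one, zpow_neg, zpow_natCast, div_pow, mul_pow]
  refine ⟨?_, ?_, ?_, ?_⟩ <;> field_simp <;> ring

theorem stmt_17 (x y : ℤ → ℝ) (b d : ℝ)
    (hb : b * x 0 * y (-1) ≠ 1) (hd : d * x (-1) * y 0 ≠ 1)
    (hx : ∀ n : ℤ, -1 ≤ n → x n ≠ 0) (hy : ∀ n : ℤ, -1 ≤ n → y n ≠ 0)
    (hda : ∀ n : ℕ, (-1) + b * (x n * y ((n : ℤ) - 1)) ≠ 0)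
    (hdc : ∀ n : ℕ, (-1) + d * (x ((n : ℤ) - 1) * y n) ≠ 0)
    (hxe : ∀ n : ℕ, x ((n : ℤ) + 1) =
      x n * y ((n : ℤ) - 1) / (y n * ((-1) + b * (x n * y ((n : ℤ) - 1)))))
    (hye : ∀ n : ℕ, y ((n : ℤ) + 1) =
      x ((n : ℤ) - 1) * y n / (x n * ((-1) + d * (x ((n : ℤ) - 1) * y n)))) :
    ∀ n : ℕ,
      x (2 * (n : ℤ) - 1) =
        x (-1) ^ (1 - (n : ℤ)) * (x 0 * y (-1) / y 0) ^ n *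
          (-1 + b * x 0 * y (-1)) ^ (-(n : ℤ)) ∧
      x (2 * (n : ℤ)) =
        x 0 ^ (n + 1) * (y (-1) / (x (-1) * y 0)) ^ n * (-1 + d * x (-1) * y 0) ^ n ∧
      y (2 * (n : ℤ) - 1) =
        y (-1) ^ (1 - (n : ℤ)) * (x (-1) * y 0 / x 0) ^ n *
          (-1 + d * x (-1) * y 0) ^ (-(n : ℤ)) ∧
      y (2 * (n : ℤ)) =
        y 0 ^ (n + 1) * (x (-1) / (x 0 * y (-1))) ^ n * (-1 + b * x 0 * y (-1)) ^ n :=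
  stmt_17_general x y b d hx hy hda hdc hxe hye
end

section
/- Let λ be a nonzero real number. If (x_n)_{n≥-1}, (y_n)_{n≥-1} solve the system with x_n ≠ 0 and y_n ≠ 0 for all n, then the sequences defined by X_n := λ^{(-1)^n}·x_n and Y_n := λ^{(-1)^n}·y_n also solve the system with the same coefficient sequences (a_n), (b_n), (c_n), (d_n); that is, for all n ≥ 0, X_{n+1} = X_n·Y_{n-1}/(Y_n·(a_n + b_n·X_n·Y_{n-1})) and Y_{n+1} = X_{n-1}·Y_n/(X_n·(c_n + d_n·X_{n-1}·Y_n)). -/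
theorem stmt_18 (t : ℝ) (ht : t ≠ 0) (x y X Y : ℤ → ℝ) (a b c d : ℕ → ℝ)
    (hx : ∀ n : ℤ, -1 ≤ n → x n ≠ 0) (hy : ∀ n : ℤ, -1 ≤ n → y n ≠ 0)
    (hda : ∀ n : ℕ, a n + b n * (x n * y ((n : ℤ) - 1)) ≠ 0)
    (hdc : ∀ n : ℕ, c n + d n * (x ((n : ℤ) - 1) * y n) ≠ 0)
    (hxe : ∀ n : ℕ, x ((n : ℤ) + 1) =
      x n * y ((n : ℤ) - 1) / (y n * (a n + b n * (x n * y ((n : ℤ) - 1)))))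
    (hye : ∀ n : ℕ, y ((n : ℤ) + 1) =
      x ((n : ℤ) - 1) * y n / (x n * (c n + d n * (x ((n : ℤ) - 1) * y n))))
    (hX : ∀ n : ℤ, X n = (if Even n then t else t⁻¹) * x n)
    (hY : ∀ n : ℤ, Y n = (if Even n then t else t⁻¹) * y n) :
    ∀ n : ℕ, X ((n : ℤ) + 1) =
        X n * Y ((n : ℤ) - 1) / (Y n * (a n + b n * (X n * Y ((n : ℤ) - 1)))) ∧
      Y ((n : ℤ) + 1) =
        X ((n : ℤ) - 1) * Y n / (X n * (c n + d n * (X ((n : ℤ) - 1) * Y n))) := by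
  intro n
  have hxn : x (n : ℤ) ≠ 0 := hx _ (by omega)
  have hyn : y (n : ℤ) ≠ 0 := hy _ (by omega)
  have hA := hda n
  have hC := hdc n
  have hxe' := hxe n
  have hye' := hye n
  have hti : t⁻¹ ≠ 0 := inv_ne_zero ht
  rcases Int.even_or_odd (n : ℤ) with he | ho
  · have h1 : ¬ Even ((n : ℤ) + 1) := by rw [Int.even_add_one]; simpa using he
    have h2 : ¬ Even ((n : ℤ) - 1) := by rw [Int.even_sub_one]; simpa using he
    simp only [hX, hY, if_pos he, if_neg h1, if_neg h2]
    have key1 : t * x (n : ℤ) * (t⁻¹ * y ((n : ℤ) - 1)) = x (n : ℤ) * y ((n : ℤ) - 1) := by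
      field_simp
    have key2 : t⁻¹ * x ((n : ℤ) - 1) * (t * y (n : ℤ)) = x ((n : ℤ) - 1) * y (n : ℤ) := by
      field_simp
    constructor
    · rw [key1, hxe']
      field_simp
      try tauto
    · rw [key2, hye']
      field_simp
      try tauto
  · have he : ¬ Even (n : ℤ) := Int.not_even_iff_odd.2 ho
    have h1 : Even ((n : ℤ) + 1) := Int.even_add_one.2 he
    have h2 : Even ((n : ℤ) - 1) := Int.even_sub_one.2 he
    simp only [hX, hY, if_neg he, if_pos h1, if_pos h2]
    have key1 : t⁻¹ * x (n : ℤ) * (t * y ((n : ℤ) - 1)) = x (n : ℤ) * y ((n : ℤ) - 1) := by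
      field_simp
    have key2 : t * x ((n : ℤ) - 1) * (t⁻¹ * y (n : ℤ)) = x ((n : ℤ) - 1) * y (n : ℤ) := by
      field_simp
    constructor
    · rw [key1, hxe']
      field_simp
      try tauto
    · rw [key2, hye']
      field_simp
      try tauto
end
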